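/- arXiv:1307.1554 — 3 statements merged into one kernel-verified Lean document; each statement's English description precedes it below -/
import Mathlib

section
/- For any finite-dimensional unital composition algebra over ℝ or ℂ, the multiplicative non-degenerate quadratic form η is uniquely determined by the algebra structure: if η₁ and η₂ are two non-degenerate quadratic forms on the same unital algebra, each satisfying ηᵢ(x·y) = ηᵢ(x)ηᵢ(y) for all x, y, then η₁ = η₂. -/
/-!
Linearising `η (x * y) = η x * η y` in `x` and specialising shows that
`x * x - (polar η x 1 • x - η x • 1)` is orthogonal to everything, so by nondegeneracy every
multiplicative form satisfies `x * x = polar η x 1 • x - η x • 1`: the value `η x` is read off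
from the algebra as a coefficient of `x * x`. If `x` is not a multiple of `1`, comparing these
identities for `η₁` and `η₂` gives `η₁ x = η₂ x`; on multiples `c • 1` both forms equal `c ^ 2`,
since `η 1 = 1`.
-/

namespace QuadraticMap

section Composition

variable {R V : Type*} [CommRing R] [AddCommGroup V] [Module R V]
  {mul : V →ₗ[R] V →ₗ[R] V} {η : QuadraticMap R V R}

theorem polar_mul_left_mul_left (hcomp : ∀ x y, η (mul x y) = η x * η y) (x y w : V) :
    polar η (mul x y) (mul x w) = η x * polar η y w := by
  simp only [polar, ← map_add, hcomp]
  ring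

theorem polar_mul_add_polar_mul (hcomp : ∀ x y, η (mul x y) = η x * η y) (x₁ x₂ y w : V) :
    polar η (mul x₁ y) (mul x₂ w) + polar η (mul x₂ y) (mul x₁ w) =
      polar η x₁ x₂ * polar η y w := by
  have h := polar_mul_left_mul_left hcomp (x₁ + x₂) y w
  simp only [map_add, LinearMap.add_apply, polar_add_left, polar_add_right,
    polar_mul_left_mul_left hcomp, QuadraticMap.map_add η x₁ x₂] at h
  linear_combination h

theorem mul_self_eq_polar_smul_sub_smul {one : V} (hone_left : ∀ x, mul one x = x)
    (hone_right : ∀ x, mul x one = x) (hnd : (polarBilin η).Nondegenerate)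
    (hcomp : ∀ x y, η (mul x y) = η x * η y) (x : V) :
    mul x x = polar η x one • x - η x • one := by
  rw [← sub_eq_zero]
  refine hnd.1 _ fun z => ?_
  have h := polar_mul_add_polar_mul hcomp x one x z
  have h' := polar_mul_left_mul_left hcomp x one z
  rw [hone_left, hone_left] at h
  rw [hone_right] at h'
  simp only [map_sub, map_smul, LinearMap.sub_apply, LinearMap.smul_apply,
    polarBilin_apply_apply, smul_eq_mul]
  linear_combination h - h'

theorem map_one_eq_one [IsDomain R] [Nontrivial V] {one : V} (hone_left : ∀ x, mul one x = x)
    (hnd : (polarBilin η).Nondegenerate) (hcomp : ∀ x y, η (mul x y) = η x * η y) :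
    η one = 1 := by
  have hsq : η one = η one * η one := by simpa only [hone_left] using hcomp one one
  have hidem : η one * (η one - 1) = 0 := by linear_combination -hsq
  refine sub_eq_zero.1 ((mul_eq_zero.1 hidem).resolve_left fun h0 => ?_)
  have hzero : ∀ x, η x = 0 := fun x => by rw [← hone_left x, hcomp, h0, zero_mul]
  obtain ⟨v, hv⟩ := exists_ne (0 : V)
  exact hv (hnd.1 v fun y => by simp [polarBilin_apply_apply, polar, hzero])

end Composition

theorem eq_of_polar_smul_sub_smul_eq {F V : Type*} [Field F] [AddCommGroup V] [Module F V]
    {η₁ η₂ : QuadraticForm F V} {one : V} (hone : one ≠ 0) (h_one : η₁ one = η₂ one)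
    (h : ∀ x, polar η₁ x one • x - η₁ x • one = polar η₂ x one • x - η₂ x • one) :
    η₁ = η₂ := by
  ext x
  by_cases hx : ∃ c : F, c • one = x
  · obtain ⟨c, rfl⟩ := hx
    simp only [QuadraticMap.map_smul, h_one]
  · push Not at hx
    have hli := (LinearIndependent.pair_iff' hone).2 hx
    have hcoeff := LinearIndependent.pair_iff.1 hli (η₂ x - η₁ x) (polar η₁ x one - polar η₂ x one)
      (by linear_combination (norm := module) h x)
    exact (sub_eq_zero.1 hcoeff.1).symm

end QuadraticMap

theorem composition_algebra_norm_unique_general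
    (F : Type*) [Field F]
    (V : Type*) [AddCommGroup V] [Module F V]
    (mul : V →ₗ[F] V →ₗ[F] V) (one : V)
    (hone : ∀ x : V, mul one x = x ∧ mul x one = x)
    (η₁ η₂ : QuadraticForm F V)
    (hnd₁ : LinearMap.BilinForm.Nondegenerate (QuadraticMap.polarBilin η₁))
    (hnd₂ : LinearMap.BilinForm.Nondegenerate (QuadraticMap.polarBilin η₂))
    (hcomp₁ : ∀ x y : V, η₁ (mul x y) = η₁ x * η₁ y)
    (hcomp₂ : ∀ x y : V, η₂ (mul x y) = η₂ x * η₂ y) :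
    η₁ = η₂ := by
  have hone_left x := (hone x).1
  have hone_right x := (hone x).2
  rcases subsingleton_or_nontrivial V with hV | hV
  · ext x
    rw [Subsingleton.elim x 0, QuadraticMap.map_zero, QuadraticMap.map_zero]
  have hone_ne : one ≠ 0 := fun h => by
    obtain ⟨v, hv⟩ := exists_ne (0 : V)
    exact hv (by rw [← hone_left v, h, map_zero, LinearMap.zero_apply])
  refine QuadraticMap.eq_of_polar_smul_sub_smul_eq hone_ne ?_ fun x => ?_
  · rw [QuadraticMap.map_one_eq_one hone_left hnd₁ hcomp₁,
      QuadraticMap.map_one_eq_one hone_left hnd₂ hcomp₂]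
  · rw [← QuadraticMap.mul_self_eq_polar_smul_sub_smul hone_left hone_right hnd₁ hcomp₁,
      ← QuadraticMap.mul_self_eq_polar_smul_sub_smul hone_left hone_right hnd₂ hcomp₂]

/-- For a finite-dimensional unital (composition) algebra over ℝ or ℂ, the
multiplicative non-degenerate quadratic form is uniquely determined by the algebra
structure: if `η₁` and `η₂` are two non-degenerate quadratic forms on the same unital
algebra, each satisfying `ηᵢ (x * y) = ηᵢ x * ηᵢ y` for all `x y`, then `η₁ = η₂`. -/
theorem composition_algebra_norm_unique
    (F : Type*) [Field F]
    (hF : Nonempty (F ≃+* ℝ) ∨ Nonempty (F ≃+* ℂ))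
    (V : Type*) [AddCommGroup V] [Module F V] [FiniteDimensional F V]
    (mul : V →ₗ[F] V →ₗ[F] V) (one : V)
    (hone : ∀ x : V, mul one x = x ∧ mul x one = x)
    (η₁ η₂ : QuadraticForm F V)
    (hnd₁ : LinearMap.BilinForm.Nondegenerate (QuadraticMap.polarBilin η₁))
    (hnd₂ : LinearMap.BilinForm.Nondegenerate (QuadraticMap.polarBilin η₂))
    (hcomp₁ : ∀ x y : V, η₁ (mul x y) = η₁ x * η₁ y)
    (hcomp₂ : ∀ x y : V, η₂ (mul x y) = η₂ x * η₂ y) :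
    η₁ = η₂ :=
  composition_algebra_norm_unique_general F V mul one hone η₁ η₂ hnd₁ hnd₂ hcomp₁ hcomp₂
end

section
/- Each of the 240 octonions consisting of the 112 elements ±e_t ± e_u for distinct t, u ∈ {∞, 0, 1, …, 6} (i.e. distinct indices from the basis {1 = e₀, e₁, …, e₇}) and the 128 elements ½(±1 ± e₁ ± e₂ ± e₃ ± e₄ ± e₅ ± e₆ ± e₇) with an odd number of minus signs has norm η equal to 2; moreover the ℤ-span L of these 240 octonions is a free ℤ-module of rank 8 inside 𝕆 on which the norm η takes even non-negative integer values. -/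
/-!
Octonions 𝕆: 8-dimensional real composition division algebra with orthonormal
basis {e₀ = 1, e₁, …, e₇}, multiplication determined by e₁e₂ = e₄ together with
its images under the index maps e_t ↦ e_{t+1} and e_t ↦ e_{2t}, conjugation
x ↦ x̄, and norm η(x) = x x̄.
-/

noncomputable section

namespace LeechPaper

/-- The octonions, as 8-tuples of real coordinates over the basis
`{e₀ = 1, e₁, …, e₇}`. -/
structure Oct where
  c : Fin 8 → ℝ

namespace Oct

def equivFun : Oct ≃ (Fin 8 → ℝ) where
  toFun := Oct.c
  invFun := Oct.mk
  left_inv _ := rfl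
  right_inv _ := rfl

instance : AddCommGroup Oct := equivFun.addCommGroup

instance : SMul ℝ Oct := ⟨fun r x => ⟨fun k => r * x.c k⟩⟩

/-- The basis octonions `e t`, `t ∈ PL(7) = {∞} ∪ 𝔽₇` (labelled here by `Fin 8`,
with `e 0 = 1` the real unit and `e 1, …, e 7` the imaginary units). -/
def e (t : Fin 8) : Oct := ⟨fun k => if k = t then 1 else 0⟩

instance : One Oct := ⟨e 0⟩

/-- Index part of the structure constants: `e i * e j = ± e (octIdxTbl i j)`.
The table encodes `e₁e₂ = e₄` together with all its images under the index maps
`e_t ↦ e_{t+1}` and `e_t ↦ e_{2t}` (imaginary indices taken mod 7), i.e. the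
Fano lines `(1,2,4), (2,3,5), (3,4,6), (4,5,7), (5,6,1), (6,7,2), (7,1,3)`. -/
def octIdxTbl : Matrix (Fin 8) (Fin 8) (Fin 8) :=
  !![0, 1, 2, 3, 4, 5, 6, 7;
     1, 0, 4, 7, 2, 6, 5, 3;
     2, 4, 0, 5, 1, 3, 7, 6;
     3, 7, 5, 0, 6, 2, 4, 1;
     4, 2, 1, 6, 0, 7, 3, 5;
     5, 6, 3, 2, 7, 0, 1, 4;
     6, 5, 7, 4, 3, 1, 0, 2;
     7, 3, 6, 1, 5, 4, 2, 0]

/-- Sign part of the structure constants: `e i * e j = octSgnTbl i j • e (octIdxTbl i j)`. -/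
def octSgnTbl : Matrix (Fin 8) (Fin 8) ℝ :=
  !![1, 1, 1, 1, 1, 1, 1, 1;
     1, -1, 1, 1, -1, 1, -1, -1;
     1, -1, -1, 1, 1, -1, 1, -1;
     1, -1, -1, -1, 1, 1, -1, 1;
     1, 1, -1, -1, -1, 1, 1, -1;
     1, -1, 1, -1, -1, -1, 1, 1;
     1, 1, -1, 1, -1, -1, -1, 1;
     1, 1, 1, -1, 1, -1, -1, -1]

/-- Octonion multiplication, bilinear with structure constants given by the tables. -/
instance : Mul Oct :=
  ⟨fun x y => ⟨fun k => ∑ i : Fin 8, ∑ j : Fin 8,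
    (if octIdxTbl i j = k then octSgnTbl i j else 0) * x.c i * y.c j⟩⟩

/-- Octonion conjugation `x ↦ x̄` (negate the imaginary coordinates). -/
def conj (x : Oct) : Oct := ⟨fun k => if k = 0 then x.c 0 else -x.c k⟩

/-- The real part of an octonion. -/
def re (x : Oct) : ℝ := x.c 0

/-- The norm `η(x) = x x̄` (which is a real octonion; we record its real value). -/
def eta (x : Oct) : ℝ := re (x * conj x)

end Oct

open Oct

/-- The norm `N(x,y,z) = ½(x x̄ + y ȳ + z z̄)` on `𝕆³`. -/
def N (x y z : Oct) : ℝ := (eta x + eta y + eta z) / 2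

/-- The conjugate transpose of a `3 × 3` octonionic matrix. -/
def ctrans (M : Matrix (Fin 3) (Fin 3) Oct) : Matrix (Fin 3) (Fin 3) Oct :=
  fun i j => conj (M j i)

/-- The matrix `V = v̄ vᵀ ∈ J₃^𝕆` with `(i,j)` entry `v̄ᵢ vⱼ`, for `v ∈ 𝕆³`. -/
def jmat (v : Fin 3 → Oct) : Matrix (Fin 3) (Fin 3) Oct :=
  fun i j => conj (v i) * v j

/-- The (real) trace of a Hermitian `3 × 3` octonionic matrix. -/
def rtr (J : Matrix (Fin 3) (Fin 3) Oct) : ℝ :=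
  re (J 0 0) + re (J 1 1) + re (J 2 2)

/-- The cubic norm (determinant) of a Hermitian `3 × 3` octonionic matrix
`J = [[r₁, A₁, Ā₂],[Ā₁, r₂, A₃],[A₂, Ā₃, r₃]]`:
`det J = r₁r₂r₃ − r₁ η(A₃) − r₂ η(A₂) − r₃ η(A₁) + 2 Re((A₁A₃)A₂)`. -/
def jdet (J : Matrix (Fin 3) (Fin 3) Oct) : ℝ :=
  re (J 0 0) * re (J 1 1) * re (J 2 2)
    - re (J 0 0) * eta (J 1 2) - re (J 1 1) * eta (J 2 0) - re (J 2 2) * eta (J 0 1)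
    + 2 * re ((J 0 1 * J 1 2) * J 2 0)

/-- The quadratic adjoint `J♮ = J² − tr(J)·J + ½(tr(J)² − tr(J²))·I` of a Hermitian
`3 × 3` octonionic matrix. -/
def jadj (J : Matrix (Fin 3) (Fin 3) Oct) : Matrix (Fin 3) (Fin 3) Oct :=
  J * J - rtr J • J + (((rtr J) ^ 2 - rtr (J * J)) / 2) • (1 : Matrix (Fin 3) (Fin 3) Oct)

/-- The 240 root octonions: the 112 octonions `±e_t ± e_u` for distinct
`t, u ∈ PL(7)` together with the 128 octonions `½(±1 ± e₁ ± ⋯ ± e₇)` having an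
odd number of minus signs. Their ℤ-span `L` is a scaled copy of the E₈ lattice. -/
def Roots : Set Oct :=
  {x | ∃ t u : Fin 8, t ≠ u ∧ ∃ a b : ℝ, (a = 1 ∨ a = -1) ∧ (b = 1 ∨ b = -1) ∧
        x = a • e t + b • e u} ∪
  {x | ∃ ε : Fin 8 → ℝ, (∀ i, ε i = 1 ∨ ε i = -1) ∧
        Odd (Finset.univ.filter fun i => ε i = -1).card ∧
        x = (1/2 : ℝ) • ∑ i : Fin 8, ε i • e i}

/-- The lattice `L`, a scaled copy of the E₈ root lattice inside 𝕆. -/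
def L : Submodule ℤ Oct := Submodule.span ℤ Roots

end LeechPaper

end

/-!
Write `x ∈ 𝕆` through its doubled coordinates `m = 2x`. The structure constants give
`η(x) = ∑ x_k²`, so `η(½ m) = ¼ ∑ m_k²`. Every root is `½ m` with `∑ m_k² = 8` and `m` in the
lattice of integer vectors whose entries all have the parity of `m₀` and with
`∑ m_k ≡ 2 m₀ (mod 4)`; this lattice is closed under ℤ-combinations, so it contains the
doubled coordinates of all of `L`. On it `8 ∣ ∑ m_k²`: writing `m_k = m₀ + 2 d_k`,
`∑ m_k² = 8 m₀² + 4 m₀ ∑ d_k + 4 ∑ d_k²`, and `∑ d_k² ≡ ∑ d_k ≡ m₀ (mod 2)`.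
Hence `η` is even on `L`. Finally `L` lies in `½ ℤ⁸ ≅ ℤ⁸`, so it is free of rank at most 8,
and it contains the eight independent vectors `2 e_k`.
-/

open Module in
theorem Submodule.free_and_finrank_eq_card_of_le_range {R M ι : Type*} [CommRing R] [IsDomain R]
    [IsPrincipalIdealRing R] [AddCommGroup M] [Module R M] [Fintype ι]
    {f : (ι → R) →ₗ[R] M} (hf : Function.Injective f) {N : Submodule R M}
    (hN : N ≤ LinearMap.range f) {b : ι → M} (hb : LinearIndependent R b) (hbN : ∀ i, b i ∈ N) :
    Free R N ∧ finrank R N = Fintype.card ι := by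
  let e : N.comap f ≃ₗ[R] N :=
    (equivMapOfInjective f hf _).trans (LinearEquiv.ofEq _ _ (map_comap_eq_self hN))
  have : Module.Finite R N := .equiv e
  refine ⟨.of_equiv e, le_antisymm ?_ ?_⟩
  · calc finrank R N = finrank R (N.comap f) := e.finrank_eq.symm
      _ ≤ finrank R (ι → R) := finrank_le _
      _ = Fintype.card ι := finrank_fintype_fun_eq_card R
  · exact (LinearIndependent.of_comp N.subtype (v := fun i => (⟨b i, hbN i⟩ : N)) hb)
      |>.fintype_card_le_finrank

namespace LeechPaper
namespace Oct

@[ext] theorem ext {x y : Oct} (h : ∀ k, x.c k = y.c k) : x = y := by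
  cases x; cases y; exact congrArg _ (funext h)

@[simp] theorem c_add (x y : Oct) (k : Fin 8) : (x + y).c k = x.c k + y.c k := rfl
@[simp] theorem c_zero (k : Fin 8) : (0 : Oct).c k = 0 := rfl
@[simp] theorem c_smul (r : ℝ) (x : Oct) (k : Fin 8) : (r • x).c k = r * x.c k := rfl
@[simp] theorem c_zsmul (n : ℤ) (x : Oct) (k : Fin 8) : (n • x).c k = n * x.c k :=
  zsmul_eq_mul _ _

@[simp] theorem c_sum {ι : Type*} (s : Finset ι) (f : ι → Oct) (k : Fin 8) :
    (∑ i ∈ s, f i).c k = ∑ i ∈ s, (f i).c k :=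
  map_sum (⟨⟨fun x : Oct => x.c k, rfl⟩, fun _ _ => rfl⟩ : Oct →+ ℝ) f s

@[simp] theorem c_e (t k : Fin 8) : (e t).c k = if k = t then 1 else 0 := rfl

theorem octIdxTbl_eq_zero_iff (i j : Fin 8) : octIdxTbl i j = 0 ↔ j = i := by
  fin_cases i <;> fin_cases j <;> decide

theorem octSgnTbl_self (i : Fin 8) : octSgnTbl i i = if i = 0 then 1 else -1 := by
  fin_cases i <;> rfl

theorem eta_eq_sum_sq (x : Oct) : eta x = ∑ k, x.c k ^ 2 := by
  change ∑ i, ∑ j, (if octIdxTbl i j = 0 then octSgnTbl i j else 0) * x.c i * (conj x).c j = _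
  simp only [octIdxTbl_eq_zero_iff, ite_mul, zero_mul, Finset.sum_ite_eq', Finset.mem_univ,
    if_true, octSgnTbl_self, conj]
  refine Finset.sum_congr rfl fun i _ => ?_
  split_ifs with hi
  · subst hi; ring
  · ring

end Oct

open Oct Finset

noncomputable def halfVec : (Fin 8 → ℤ) →ₗ[ℤ] Oct where
  toFun m := ⟨fun k => m k / 2⟩
  map_add' m n := by ext k; simp [add_div]
  map_smul' z m := by ext k; simp [mul_div_assoc]

@[simp] theorem c_halfVec (m : Fin 8 → ℤ) (k : Fin 8) : (halfVec m).c k = m k / 2 := rfl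

theorem halfVec_injective : Function.Injective halfVec := fun m n h =>
  funext fun k => by simpa using congrArg (·.c k) h

theorem eta_halfVec (m : Fin 8 → ℤ) : eta (halfVec m) = ((∑ k, m k ^ 2 : ℤ) : ℝ) / 4 := by
  rw [eta_eq_sum_sq]
  push_cast
  rw [sum_div]
  refine sum_congr rfl fun k _ => ?_
  simp only [c_halfVec]
  ring

def doubledE8 : Submodule ℤ (Fin 8 → ℤ) where
  carrier := {m | (∀ k, m k ≡ m 0 [ZMOD 2]) ∧ ∑ k, m k ≡ 2 * m 0 [ZMOD 4]}
  zero_mem' := ⟨fun _ => rfl, by simp [Int.ModEq]⟩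
  add_mem' {m n} hm hn :=
    ⟨fun k => (hm.1 k).add (hn.1 k), by
      simpa only [Pi.add_apply, sum_add_distrib, mul_add] using hm.2.add hn.2⟩
  smul_mem' z m hm :=
    ⟨fun k => (hm.1 k).mul_left z, by
      simpa only [Pi.smul_apply, smul_eq_mul, ← mul_sum, mul_left_comm] using hm.2.mul_left z⟩

theorem eight_dvd_sum_sq_of_mem_doubledE8 {m : Fin 8 → ℤ} (hm : m ∈ doubledE8) :
    8 ∣ ∑ k, m k ^ 2 := by
  obtain ⟨hpar, hsum⟩ := hm
  choose d hd using fun k => (hpar k).symm.dvd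
  set a := m 0
  have hm_eq : ∀ k, m k = a + 2 * d k := fun k => by linarith [hd k]
  set D := ∑ k, d k
  set S := ∑ k, d k ^ 2
  have hsum_eq : ∑ k, m k = 8 * a + 2 * D := by
    simp [hm_eq, sum_add_distrib, D, ← mul_sum]
  have hsq_eq : ∑ k, m k ^ 2 = 8 * a ^ 2 + 4 * a * D + 4 * S := by
    simp only [hm_eq, add_sq, mul_pow, sum_add_distrib, D, S, ← mul_sum, sum_const, card_univ,
      Fintype.card_fin, nsmul_eq_mul]
    push_cast
    ring
  have hD : 2 ∣ D - a := by
    rw [hsum_eq] at hsum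
    unfold Int.ModEq at hsum
    omega
  have hS : 2 ∣ S - D := by
    rw [← sum_sub_distrib]
    exact dvd_sum fun k _ => by
      simpa [sq, mul_sub] using (Int.even_mul_pred_self (d k)).two_dvd
  obtain ⟨s, hs⟩ := hS
  obtain ⟨r, hr⟩ := hD
  obtain ⟨c, hc⟩ := (Int.even_mul_succ_self a).two_dvd
  exact ⟨a ^ 2 + s + r * (a + 1) + c, by
    rw [hsq_eq]; linear_combination 4 * hs + 4 * (a + 1) * hr + 4 * hc⟩

theorem exists_intCast_eq_of_eq_one_or_eq_neg_one {a : ℝ} (ha : a = 1 ∨ a = -1) :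
    ∃ α : ℤ, (α = 1 ∨ α = -1) ∧ (α : ℝ) = a := by
  rcases ha with rfl | rfl
  exacts [⟨1, by simp⟩, ⟨-1, by simp⟩]

theorem two_smul_mem_doubledE8 {n : Fin 8 → ℤ} (hn : Even (∑ k, n k)) :
    (2 : ℤ) • n ∈ doubledE8 := by
  obtain ⟨j, hj⟩ := hn
  refine ⟨fun k => ?_, ?_⟩
  · simp [Int.ModEq, Int.mul_emod_right]
  · simp only [Pi.smul_apply, smul_eq_mul, ← mul_sum, hj, Int.ModEq]
    omega

theorem mem_doubledE8_of_sign {σ : Fin 8 → ℤ} (hσ : ∀ k, σ k = 1 ∨ σ k = -1)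
    (hodd : Odd #{k | σ k = -1}) : σ ∈ doubledE8 := by
  refine ⟨fun k => ?_, ?_⟩
  · rcases hσ k with h | h <;> rcases hσ 0 with h0 | h0 <;> simp [h, h0, Int.ModEq]
  · have hsum : ∑ k, σ k = 8 - 2 * #{k | σ k = -1} := by
      have : ∀ k, σ k = 1 - 2 * (if σ k = -1 then 1 else 0) := fun k => by
        rcases hσ k with h | h <;> simp [h]
      rw [sum_congr rfl fun k _ => this k, sum_sub_distrib, ← mul_sum, sum_boole]
      simp
    obtain ⟨j, hj⟩ := hodd
    rcases hσ 0 with h0 | h0 <;> simp only [Int.ModEq, hsum, hj, h0] <;> push_cast <;> omega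

theorem exists_doubledE8_of_pair_root {t u : Fin 8} (htu : t ≠ u) {a b : ℝ}
    (ha : a = 1 ∨ a = -1) (hb : b = 1 ∨ b = -1) :
    ∃ m ∈ doubledE8, ∑ k, m k ^ 2 = 8 ∧ halfVec m = a • e t + b • e u := by
  obtain ⟨α, hα, rfl⟩ := exists_intCast_eq_of_eq_one_or_eq_neg_one ha
  obtain ⟨β, hβ, rfl⟩ := exists_intCast_eq_of_eq_one_or_eq_neg_one hb
  set n : Fin 8 → ℤ := Pi.single t α + Pi.single u β
  have hsum : ∑ k, n k = α + β := by simp [n, sum_add_distrib]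
  have hsq : ∑ k, n k ^ 2 = α ^ 2 + β ^ 2 := by
    have : ∀ k, n k ^ 2 = (Pi.single t (α ^ 2) + Pi.single u (β ^ 2) : Fin 8 → ℤ) k := fun k => by
      simp only [n, Pi.add_apply, Pi.single_apply]
      split_ifs with h1 h2 <;> first | exact absurd (h1.symm.trans h2) htu | ring
    simp [this, sum_add_distrib]
  refine ⟨(2 : ℤ) • n, two_smul_mem_doubledE8 ?_, ?_, ?_⟩
  · rw [hsum]; rcases hα with rfl | rfl <;> rcases hβ with rfl | rfl <;> decide
  · simp only [Pi.smul_apply, smul_eq_mul, mul_pow, ← mul_sum, hsq]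
    rcases hα with rfl | rfl <;> rcases hβ with rfl | rfl <;> norm_num
  · ext k
    simp only [c_halfVec, Pi.smul_apply, smul_eq_mul, n, Pi.add_apply, Pi.single_apply, c_add,
      c_smul, c_e]
    split_ifs with h1 h2 <;> first | exact absurd (h1.symm.trans h2) htu | (push_cast; ring)

theorem exists_doubledE8_of_half_root {ε : Fin 8 → ℝ} (hε : ∀ i, ε i = 1 ∨ ε i = -1)
    (hodd : Odd #{i | ε i = -1}) :
    ∃ m ∈ doubledE8, ∑ k, m k ^ 2 = 8 ∧ halfVec m = (1/2 : ℝ) • ∑ i, ε i • e i := by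
  choose σ hσ hσε using fun i => exists_intCast_eq_of_eq_one_or_eq_neg_one (hε i)
  have hfilter : ∀ i, ε i = -1 ↔ σ i = -1 := fun i => by rw [← hσε i]; norm_cast
  refine ⟨σ, mem_doubledE8_of_sign hσ (by simpa only [hfilter] using hodd), ?_, ?_⟩
  · have : ∀ k, σ k ^ 2 = 1 := fun k => by rcases hσ k with h | h <;> simp [h]
    simp [this]
  · ext k
    simp only [c_halfVec, ← hσε, c_smul, c_sum, c_e, mul_ite, mul_one, mul_zero, sum_ite_eq,
      mem_univ, if_true]
    ring

theorem exists_doubledE8_of_mem_Roots {x : Oct} (hx : x ∈ Roots) :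
    ∃ m ∈ doubledE8, ∑ k, m k ^ 2 = 8 ∧ halfVec m = x := by
  rcases hx with ⟨t, u, htu, a, b, ha, hb, rfl⟩ | ⟨ε, hε, hodd, rfl⟩
  · exact exists_doubledE8_of_pair_root htu ha hb
  · exact exists_doubledE8_of_half_root hε hodd

theorem eta_of_mem_Roots {x : Oct} (hx : x ∈ Roots) : eta x = 2 := by
  obtain ⟨m, -, hsq, rfl⟩ := exists_doubledE8_of_mem_Roots hx
  rw [eta_halfVec, hsq]
  norm_num

theorem L_le_map_doubledE8 : L ≤ doubledE8.map halfVec :=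
  Submodule.span_le.2 fun x hx => by
    obtain ⟨m, hm, -, rfl⟩ := exists_doubledE8_of_mem_Roots hx
    exact ⟨m, hm, rfl⟩

theorem exists_eta_eq_two_mul_of_mem_L {x : Oct} (hx : x ∈ L) : ∃ n : ℕ, eta x = 2 * n := by
  obtain ⟨m, hm, rfl⟩ := L_le_map_doubledE8 hx
  obtain ⟨n, hn⟩ := eight_dvd_sum_sq_of_mem_doubledE8 hm
  lift n to ℕ using by nlinarith [sum_nonneg fun k (_ : k ∈ univ) => sq_nonneg (m k)]
  refine ⟨n, ?_⟩
  rw [eta_halfVec, hn]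
  push_cast
  ring

theorem two_smul_e_mem_L (t : Fin 8) : (2 : ℤ) • e t ∈ L := by
  obtain ⟨u, hu⟩ := exists_ne t
  have h : (2 : ℤ) • e t = ((1 : ℝ) • e t + (1 : ℝ) • e u) + ((1 : ℝ) • e t + (-1 : ℝ) • e u) := by
    ext k; simp only [c_zsmul, c_add, c_smul, c_e]; split_ifs <;> norm_num
  rw [h]
  exact L.add_mem (Submodule.subset_span (Or.inl ⟨t, u, hu.symm, 1, 1, by simp⟩))
    (Submodule.subset_span (Or.inl ⟨t, u, hu.symm, 1, -1, by simp⟩))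

theorem linearIndependent_two_smul_e : LinearIndependent ℤ fun t : Fin 8 => (2 : ℤ) • e t := by
  refine Fintype.linearIndependent_iff.2 fun g hg t => ?_
  simpa using congrArg (·.c t) hg

/-- Each of the 240 root octonions (the 112 octonions `±e_t ± e_u` for distinct
`t, u` and the 128 octonions `½(±1 ± e₁ ± ⋯ ± e₇)` with an odd number of minus
signs) has norm `η = 2`; moreover their ℤ-span `L` is a free ℤ-module of rank 8
inside 𝕆 on which `η` takes even non-negative integer values. -/
theorem roots_norm_two_and_span_even_rank_eight :
    (∀ r ∈ Roots, eta r = 2) ∧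
    Module.Free ℤ L ∧
    Module.finrank ℤ L = 8 ∧
    (∀ x ∈ L, ∃ n : ℕ, eta x = 2 * n) := by
  obtain ⟨hfree, hrank⟩ := Submodule.free_and_finrank_eq_card_of_le_range halfVec_injective
    (L_le_map_doubledE8.trans LinearMap.map_le_range) linearIndependent_two_smul_e
    two_smul_e_mem_L
  exact ⟨fun _ => eta_of_mem_Roots, hfree, hrank.trans (Fintype.card_fin 8),
    fun _ => exists_eta_eq_two_mul_of_mem_L⟩

end LeechPaper
end

section
/- Let λ, s ∈ 𝕆 with η(λ) = 2 and η(s) = 2, and let j be an imaginary basis unit (so η(j) = 1, j̄ = −j). Set v = (λ s̄, ±(λ s̄) j, 0) ∈ 𝕆³ and V = v̄ vᵀ, i.e. V = [[(s λ̄)(λ s̄), ±(s λ̄)((λ s̄) j), 0],[±(j̄(s λ̄))(λ s̄), (j̄(s λ̄))((λ s̄) j), 0],[0, 0, 0]]. Then tr(V) = 8, det(V) = 0, and V♮ = 0, so V is a rank-one element of J₃^𝕆 corresponding to a 1/2-BPS black hole with vanishing entropy. -/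
namespace LeechPaper
open Oct


lemma mul_c (x y : Oct) (k : Fin 8) : (x*y).c k = ∑ i : Fin 8, ∑ j : Fin 8,
    (if octIdxTbl i j = k then octSgnTbl i j else 0) * x.c i * y.c j := rfl

lemma co_0_0_0 : (if octIdxTbl 0 0 = 0 then octSgnTbl 0 0 else 0) = (1:ℝ) := (if_pos (by decide : octIdxTbl 0 0 = 0)).trans rfl
lemma co_0_0_1 : (if octIdxTbl 0 0 = 1 then octSgnTbl 0 0 else 0) = (0:ℝ) := if_neg (by decide : ¬ octIdxTbl 0 0 = 1)
lemma co_0_0_2 : (if octIdxTbl 0 0 = 2 then octSgnTbl 0 0 else 0) = (0:ℝ) := if_neg (by decide : ¬ octIdxTbl 0 0 = 2)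
lemma co_0_0_3 : (if octIdxTbl 0 0 = 3 then octSgnTbl 0 0 else 0) = (0:ℝ) := if_neg (by decide : ¬ octIdxTbl 0 0 = 3)
lemma co_0_0_4 : (if octIdxTbl 0 0 = 4 then octSgnTbl 0 0 else 0) = (0:ℝ) := if_neg (by decide : ¬ octIdxTbl 0 0 = 4)
lemma co_0_0_5 : (if octIdxTbl 0 0 = 5 then octSgnTbl 0 0 else 0) = (0:ℝ) := if_neg (by decide : ¬ octIdxTbl 0 0 = 5)
lemma co_0_0_6 : (if octIdxTbl 0 0 = 6 then octSgnTbl 0 0 else 0) = (0:ℝ) := if_neg (by decide : ¬ octIdxTbl 0 0 = 6)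
lemma co_0_0_7 : (if octIdxTbl 0 0 = 7 then octSgnTbl 0 0 else 0) = (0:ℝ) := if_neg (by decide : ¬ octIdxTbl 0 0 = 7)
lemma co_0_1_0 : (if octIdxTbl 0 1 = 0 then octSgnTbl 0 1 else 0) = (0:ℝ) := if_neg (by decide : ¬ octIdxTbl 0 1 = 0)
lemma co_0_1_1 : (if octIdxTbl 0 1 = 1 then octSgnTbl 0 1 else 0) = (1:ℝ) := (if_pos (by decide : octIdxTbl 0 1 = 1)).trans rfl
lemma co_0_1_2 : (if octIdxTbl 0 1 = 2 then octSgnTbl 0 1 else 0) = (0:ℝ) := if_neg (by decide : ¬ octIdxTbl 0 1 = 2)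
lemma co_0_1_3 : (if octIdxTbl 0 1 = 3 then octSgnTbl 0 1 else 0) = (0:ℝ) := if_neg (by decide : ¬ octIdxTbl 0 1 = 3)
lemma co_0_1_4 : (if octIdxTbl 0 1 = 4 then octSgnTbl 0 1 else 0) = (0:ℝ) := if_neg (by decide : ¬ octIdxTbl 0 1 = 4)
lemma co_0_1_5 : (if octIdxTbl 0 1 = 5 then octSgnTbl 0 1 else 0) = (0:ℝ) := if_neg (by decide : ¬ octIdxTbl 0 1 = 5)
lemma co_0_1_6 : (if octIdxTbl 0 1 = 6 then octSgnTbl 0 1 else 0) = (0:ℝ) := if_neg (by decide : ¬ octIdxTbl 0 1 = 6)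
lemma co_0_1_7 : (if octIdxTbl 0 1 = 7 then octSgnTbl 0 1 else 0) = (0:ℝ) := if_neg (by decide : ¬ octIdxTbl 0 1 = 7)
lemma co_0_2_0 : (if octIdxTbl 0 2 = 0 then octSgnTbl 0 2 else 0) = (0:ℝ) := if_neg (by decide : ¬ octIdxTbl 0 2 = 0)
lemma co_0_2_1 : (if octIdxTbl 0 2 = 1 then octSgnTbl 0 2 else 0) = (0:ℝ) := if_neg (by decide : ¬ octIdxTbl 0 2 = 1)
lemma co_0_2_2 : (if octIdxTbl 0 2 = 2 then octSgnTbl 0 2 else 0) = (1:ℝ) := (if_pos (by decide : octIdxTbl 0 2 = 2)).trans rfl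
lemma co_0_2_3 : (if octIdxTbl 0 2 = 3 then octSgnTbl 0 2 else 0) = (0:ℝ) := if_neg (by decide : ¬ octIdxTbl 0 2 = 3)
lemma co_0_2_4 : (if octIdxTbl 0 2 = 4 then octSgnTbl 0 2 else 0) = (0:ℝ) := if_neg (by decide : ¬ octIdxTbl 0 2 = 4)
lemma co_0_2_5 : (if octIdxTbl 0 2 = 5 then octSgnTbl 0 2 else 0) = (0:ℝ) := if_neg (by decide : ¬ octIdxTbl 0 2 = 5)
lemma co_0_2_6 : (if octIdxTbl 0 2 = 6 then octSgnTbl 0 2 else 0) = (0:ℝ) := if_neg (by decide : ¬ octIdxTbl 0 2 = 6)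
lemma co_0_2_7 : (if octIdxTbl 0 2 = 7 then octSgnTbl 0 2 else 0) = (0:ℝ) := if_neg (by decide : ¬ octIdxTbl 0 2 = 7)
lemma co_0_3_0 : (if octIdxTbl 0 3 = 0 then octSgnTbl 0 3 else 0) = (0:ℝ) := if_neg (by decide : ¬ octIdxTbl 0 3 = 0)
lemma co_0_3_1 : (if octIdxTbl 0 3 = 1 then octSgnTbl 0 3 else 0) = (0:ℝ) := if_neg (by decide : ¬ octIdxTbl 0 3 = 1)
lemma co_0_3_2 : (if octIdxTbl 0 3 = 2 then octSgnTbl 0 3 else 0) = (0:ℝ) := if_neg (by decide : ¬ octIdxTbl 0 3 = 2)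
lemma co_0_3_3 : (if octIdxTbl 0 3 = 3 then octSgnTbl 0 3 else 0) = (1:ℝ) := (if_pos (by decide : octIdxTbl 0 3 = 3)).trans rfl
lemma co_0_3_4 : (if octIdxTbl 0 3 = 4 then octSgnTbl 0 3 else 0) = (0:ℝ) := if_neg (by decide : ¬ octIdxTbl 0 3 = 4)
lemma co_0_3_5 : (if octIdxTbl 0 3 = 5 then octSgnTbl 0 3 else 0) = (0:ℝ) := if_neg (by decide : ¬ octIdxTbl 0 3 = 5)
lemma co_0_3_6 : (if octIdxTbl 0 3 = 6 then octSgnTbl 0 3 else 0) = (0:ℝ) := if_neg (by decide : ¬ octIdxTbl 0 3 = 6)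
lemma co_0_3_7 : (if octIdxTbl 0 3 = 7 then octSgnTbl 0 3 else 0) = (0:ℝ) := if_neg (by decide : ¬ octIdxTbl 0 3 = 7)
lemma co_0_4_0 : (if octIdxTbl 0 4 = 0 then octSgnTbl 0 4 else 0) = (0:ℝ) := if_neg (by decide : ¬ octIdxTbl 0 4 = 0)
lemma co_0_4_1 : (if octIdxTbl 0 4 = 1 then octSgnTbl 0 4 else 0) = (0:ℝ) := if_neg (by decide : ¬ octIdxTbl 0 4 = 1)
lemma co_0_4_2 : (if octIdxTbl 0 4 = 2 then octSgnTbl 0 4 else 0) = (0:ℝ) := if_neg (by decide : ¬ octIdxTbl 0 4 = 2)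
lemma co_0_4_3 : (if octIdxTbl 0 4 = 3 then octSgnTbl 0 4 else 0) = (0:ℝ) := if_neg (by decide : ¬ octIdxTbl 0 4 = 3)
lemma co_0_4_4 : (if octIdxTbl 0 4 = 4 then octSgnTbl 0 4 else 0) = (1:ℝ) := (if_pos (by decide : octIdxTbl 0 4 = 4)).trans rfl
lemma co_0_4_5 : (if octIdxTbl 0 4 = 5 then octSgnTbl 0 4 else 0) = (0:ℝ) := if_neg (by decide : ¬ octIdxTbl 0 4 = 5)
lemma co_0_4_6 : (if octIdxTbl 0 4 = 6 then octSgnTbl 0 4 else 0) = (0:ℝ) := if_neg (by decide : ¬ octIdxTbl 0 4 = 6)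
lemma co_0_4_7 : (if octIdxTbl 0 4 = 7 then octSgnTbl 0 4 else 0) = (0:ℝ) := if_neg (by decide : ¬ octIdxTbl 0 4 = 7)
lemma co_0_5_0 : (if octIdxTbl 0 5 = 0 then octSgnTbl 0 5 else 0) = (0:ℝ) := if_neg (by decide : ¬ octIdxTbl 0 5 = 0)
lemma co_0_5_1 : (if octIdxTbl 0 5 = 1 then octSgnTbl 0 5 else 0) = (0:ℝ) := if_neg (by decide : ¬ octIdxTbl 0 5 = 1)
lemma co_0_5_2 : (if octIdxTbl 0 5 = 2 then octSgnTbl 0 5 else 0) = (0:ℝ) := if_neg (by decide : ¬ octIdxTbl 0 5 = 2)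
lemma co_0_5_3 : (if octIdxTbl 0 5 = 3 then octSgnTbl 0 5 else 0) = (0:ℝ) := if_neg (by decide : ¬ octIdxTbl 0 5 = 3)
lemma co_0_5_4 : (if octIdxTbl 0 5 = 4 then octSgnTbl 0 5 else 0) = (0:ℝ) := if_neg (by decide : ¬ octIdxTbl 0 5 = 4)
lemma co_0_5_5 : (if octIdxTbl 0 5 = 5 then octSgnTbl 0 5 else 0) = (1:ℝ) := (if_pos (by decide : octIdxTbl 0 5 = 5)).trans rfl
lemma co_0_5_6 : (if octIdxTbl 0 5 = 6 then octSgnTbl 0 5 else 0) = (0:ℝ) := if_neg (by decide : ¬ octIdxTbl 0 5 = 6)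
lemma co_0_5_7 : (if octIdxTbl 0 5 = 7 then octSgnTbl 0 5 else 0) = (0:ℝ) := if_neg (by decide : ¬ octIdxTbl 0 5 = 7)
lemma co_0_6_0 : (if octIdxTbl 0 6 = 0 then octSgnTbl 0 6 else 0) = (0:ℝ) := if_neg (by decide : ¬ octIdxTbl 0 6 = 0)
lemma co_0_6_1 : (if octIdxTbl 0 6 = 1 then octSgnTbl 0 6 else 0) = (0:ℝ) := if_neg (by decide : ¬ octIdxTbl 0 6 = 1)
lemma co_0_6_2 : (if octIdxTbl 0 6 = 2 then octSgnTbl 0 6 else 0) = (0:ℝ) := if_neg (by decide : ¬ octIdxTbl 0 6 = 2)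
lemma co_0_6_3 : (if octIdxTbl 0 6 = 3 then octSgnTbl 0 6 else 0) = (0:ℝ) := if_neg (by decide : ¬ octIdxTbl 0 6 = 3)
lemma co_0_6_4 : (if octIdxTbl 0 6 = 4 then octSgnTbl 0 6 else 0) = (0:ℝ) := if_neg (by decide : ¬ octIdxTbl 0 6 = 4)
lemma co_0_6_5 : (if octIdxTbl 0 6 = 5 then octSgnTbl 0 6 else 0) = (0:ℝ) := if_neg (by decide : ¬ octIdxTbl 0 6 = 5)
lemma co_0_6_6 : (if octIdxTbl 0 6 = 6 then octSgnTbl 0 6 else 0) = (1:ℝ) := (if_pos (by decide : octIdxTbl 0 6 = 6)).trans rfl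
lemma co_0_6_7 : (if octIdxTbl 0 6 = 7 then octSgnTbl 0 6 else 0) = (0:ℝ) := if_neg (by decide : ¬ octIdxTbl 0 6 = 7)
lemma co_0_7_0 : (if octIdxTbl 0 7 = 0 then octSgnTbl 0 7 else 0) = (0:ℝ) := if_neg (by decide : ¬ octIdxTbl 0 7 = 0)
lemma co_0_7_1 : (if octIdxTbl 0 7 = 1 then octSgnTbl 0 7 else 0) = (0:ℝ) := if_neg (by decide : ¬ octIdxTbl 0 7 = 1)
lemma co_0_7_2 : (if octIdxTbl 0 7 = 2 then octSgnTbl 0 7 else 0) = (0:ℝ) := if_neg (by decide : ¬ octIdxTbl 0 7 = 2)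
lemma co_0_7_3 : (if octIdxTbl 0 7 = 3 then octSgnTbl 0 7 else 0) = (0:ℝ) := if_neg (by decide : ¬ octIdxTbl 0 7 = 3)
lemma co_0_7_4 : (if octIdxTbl 0 7 = 4 then octSgnTbl 0 7 else 0) = (0:ℝ) := if_neg (by decide : ¬ octIdxTbl 0 7 = 4)
lemma co_0_7_5 : (if octIdxTbl 0 7 = 5 then octSgnTbl 0 7 else 0) = (0:ℝ) := if_neg (by decide : ¬ octIdxTbl 0 7 = 5)
lemma co_0_7_6 : (if octIdxTbl 0 7 = 6 then octSgnTbl 0 7 else 0) = (0:ℝ) := if_neg (by decide : ¬ octIdxTbl 0 7 = 6)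
lemma co_0_7_7 : (if octIdxTbl 0 7 = 7 then octSgnTbl 0 7 else 0) = (1:ℝ) := (if_pos (by decide : octIdxTbl 0 7 = 7)).trans rfl
lemma co_1_0_0 : (if octIdxTbl 1 0 = 0 then octSgnTbl 1 0 else 0) = (0:ℝ) := if_neg (by decide : ¬ octIdxTbl 1 0 = 0)
lemma co_1_0_1 : (if octIdxTbl 1 0 = 1 then octSgnTbl 1 0 else 0) = (1:ℝ) := (if_pos (by decide : octIdxTbl 1 0 = 1)).trans rfl
lemma co_1_0_2 : (if octIdxTbl 1 0 = 2 then octSgnTbl 1 0 else 0) = (0:ℝ) := if_neg (by decide : ¬ octIdxTbl 1 0 = 2)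
lemma co_1_0_3 : (if octIdxTbl 1 0 = 3 then octSgnTbl 1 0 else 0) = (0:ℝ) := if_neg (by decide : ¬ octIdxTbl 1 0 = 3)
lemma co_1_0_4 : (if octIdxTbl 1 0 = 4 then octSgnTbl 1 0 else 0) = (0:ℝ) := if_neg (by decide : ¬ octIdxTbl 1 0 = 4)
lemma co_1_0_5 : (if octIdxTbl 1 0 = 5 then octSgnTbl 1 0 else 0) = (0:ℝ) := if_neg (by decide : ¬ octIdxTbl 1 0 = 5)
lemma co_1_0_6 : (if octIdxTbl 1 0 = 6 then octSgnTbl 1 0 else 0) = (0:ℝ) := if_neg (by decide : ¬ octIdxTbl 1 0 = 6)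
lemma co_1_0_7 : (if octIdxTbl 1 0 = 7 then octSgnTbl 1 0 else 0) = (0:ℝ) := if_neg (by decide : ¬ octIdxTbl 1 0 = 7)
lemma co_1_1_0 : (if octIdxTbl 1 1 = 0 then octSgnTbl 1 1 else 0) = (-1:ℝ) := (if_pos (by decide : octIdxTbl 1 1 = 0)).trans rfl
lemma co_1_1_1 : (if octIdxTbl 1 1 = 1 then octSgnTbl 1 1 else 0) = (0:ℝ) := if_neg (by decide : ¬ octIdxTbl 1 1 = 1)
lemma co_1_1_2 : (if octIdxTbl 1 1 = 2 then octSgnTbl 1 1 else 0) = (0:ℝ) := if_neg (by decide : ¬ octIdxTbl 1 1 = 2)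
lemma co_1_1_3 : (if octIdxTbl 1 1 = 3 then octSgnTbl 1 1 else 0) = (0:ℝ) := if_neg (by decide : ¬ octIdxTbl 1 1 = 3)
lemma co_1_1_4 : (if octIdxTbl 1 1 = 4 then octSgnTbl 1 1 else 0) = (0:ℝ) := if_neg (by decide : ¬ octIdxTbl 1 1 = 4)
lemma co_1_1_5 : (if octIdxTbl 1 1 = 5 then octSgnTbl 1 1 else 0) = (0:ℝ) := if_neg (by decide : ¬ octIdxTbl 1 1 = 5)
lemma co_1_1_6 : (if octIdxTbl 1 1 = 6 then octSgnTbl 1 1 else 0) = (0:ℝ) := if_neg (by decide : ¬ octIdxTbl 1 1 = 6)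
lemma co_1_1_7 : (if octIdxTbl 1 1 = 7 then octSgnTbl 1 1 else 0) = (0:ℝ) := if_neg (by decide : ¬ octIdxTbl 1 1 = 7)
lemma co_1_2_0 : (if octIdxTbl 1 2 = 0 then octSgnTbl 1 2 else 0) = (0:ℝ) := if_neg (by decide : ¬ octIdxTbl 1 2 = 0)
lemma co_1_2_1 : (if octIdxTbl 1 2 = 1 then octSgnTbl 1 2 else 0) = (0:ℝ) := if_neg (by decide : ¬ octIdxTbl 1 2 = 1)
lemma co_1_2_2 : (if octIdxTbl 1 2 = 2 then octSgnTbl 1 2 else 0) = (0:ℝ) := if_neg (by decide : ¬ octIdxTbl 1 2 = 2)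
lemma co_1_2_3 : (if octIdxTbl 1 2 = 3 then octSgnTbl 1 2 else 0) = (0:ℝ) := if_neg (by decide : ¬ octIdxTbl 1 2 = 3)
lemma co_1_2_4 : (if octIdxTbl 1 2 = 4 then octSgnTbl 1 2 else 0) = (1:ℝ) := (if_pos (by decide : octIdxTbl 1 2 = 4)).trans rfl
lemma co_1_2_5 : (if octIdxTbl 1 2 = 5 then octSgnTbl 1 2 else 0) = (0:ℝ) := if_neg (by decide : ¬ octIdxTbl 1 2 = 5)
lemma co_1_2_6 : (if octIdxTbl 1 2 = 6 then octSgnTbl 1 2 else 0) = (0:ℝ) := if_neg (by decide : ¬ octIdxTbl 1 2 = 6)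
lemma co_1_2_7 : (if octIdxTbl 1 2 = 7 then octSgnTbl 1 2 else 0) = (0:ℝ) := if_neg (by decide : ¬ octIdxTbl 1 2 = 7)
lemma co_1_3_0 : (if octIdxTbl 1 3 = 0 then octSgnTbl 1 3 else 0) = (0:ℝ) := if_neg (by decide : ¬ octIdxTbl 1 3 = 0)
lemma co_1_3_1 : (if octIdxTbl 1 3 = 1 then octSgnTbl 1 3 else 0) = (0:ℝ) := if_neg (by decide : ¬ octIdxTbl 1 3 = 1)
lemma co_1_3_2 : (if octIdxTbl 1 3 = 2 then octSgnTbl 1 3 else 0) = (0:ℝ) := if_neg (by decide : ¬ octIdxTbl 1 3 = 2)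
lemma co_1_3_3 : (if octIdxTbl 1 3 = 3 then octSgnTbl 1 3 else 0) = (0:ℝ) := if_neg (by decide : ¬ octIdxTbl 1 3 = 3)
lemma co_1_3_4 : (if octIdxTbl 1 3 = 4 then octSgnTbl 1 3 else 0) = (0:ℝ) := if_neg (by decide : ¬ octIdxTbl 1 3 = 4)
lemma co_1_3_5 : (if octIdxTbl 1 3 = 5 then octSgnTbl 1 3 else 0) = (0:ℝ) := if_neg (by decide : ¬ octIdxTbl 1 3 = 5)
lemma co_1_3_6 : (if octIdxTbl 1 3 = 6 then octSgnTbl 1 3 else 0) = (0:ℝ) := if_neg (by decide : ¬ octIdxTbl 1 3 = 6)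
lemma co_1_3_7 : (if octIdxTbl 1 3 = 7 then octSgnTbl 1 3 else 0) = (1:ℝ) := (if_pos (by decide : octIdxTbl 1 3 = 7)).trans rfl
lemma co_1_4_0 : (if octIdxTbl 1 4 = 0 then octSgnTbl 1 4 else 0) = (0:ℝ) := if_neg (by decide : ¬ octIdxTbl 1 4 = 0)
lemma co_1_4_1 : (if octIdxTbl 1 4 = 1 then octSgnTbl 1 4 else 0) = (0:ℝ) := if_neg (by decide : ¬ octIdxTbl 1 4 = 1)
lemma co_1_4_2 : (if octIdxTbl 1 4 = 2 then octSgnTbl 1 4 else 0) = (-1:ℝ) := (if_pos (by decide : octIdxTbl 1 4 = 2)).trans rfl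
lemma co_1_4_3 : (if octIdxTbl 1 4 = 3 then octSgnTbl 1 4 else 0) = (0:ℝ) := if_neg (by decide : ¬ octIdxTbl 1 4 = 3)
lemma co_1_4_4 : (if octIdxTbl 1 4 = 4 then octSgnTbl 1 4 else 0) = (0:ℝ) := if_neg (by decide : ¬ octIdxTbl 1 4 = 4)
lemma co_1_4_5 : (if octIdxTbl 1 4 = 5 then octSgnTbl 1 4 else 0) = (0:ℝ) := if_neg (by decide : ¬ octIdxTbl 1 4 = 5)
lemma co_1_4_6 : (if octIdxTbl 1 4 = 6 then octSgnTbl 1 4 else 0) = (0:ℝ) := if_neg (by decide : ¬ octIdxTbl 1 4 = 6)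
lemma co_1_4_7 : (if octIdxTbl 1 4 = 7 then octSgnTbl 1 4 else 0) = (0:ℝ) := if_neg (by decide : ¬ octIdxTbl 1 4 = 7)
lemma co_1_5_0 : (if octIdxTbl 1 5 = 0 then octSgnTbl 1 5 else 0) = (0:ℝ) := if_neg (by decide : ¬ octIdxTbl 1 5 = 0)
lemma co_1_5_1 : (if octIdxTbl 1 5 = 1 then octSgnTbl 1 5 else 0) = (0:ℝ) := if_neg (by decide : ¬ octIdxTbl 1 5 = 1)
lemma co_1_5_2 : (if octIdxTbl 1 5 = 2 then octSgnTbl 1 5 else 0) = (0:ℝ) := if_neg (by decide : ¬ octIdxTbl 1 5 = 2)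
lemma co_1_5_3 : (if octIdxTbl 1 5 = 3 then octSgnTbl 1 5 else 0) = (0:ℝ) := if_neg (by decide : ¬ octIdxTbl 1 5 = 3)
lemma co_1_5_4 : (if octIdxTbl 1 5 = 4 then octSgnTbl 1 5 else 0) = (0:ℝ) := if_neg (by decide : ¬ octIdxTbl 1 5 = 4)
lemma co_1_5_5 : (if octIdxTbl 1 5 = 5 then octSgnTbl 1 5 else 0) = (0:ℝ) := if_neg (by decide : ¬ octIdxTbl 1 5 = 5)
lemma co_1_5_6 : (if octIdxTbl 1 5 = 6 then octSgnTbl 1 5 else 0) = (1:ℝ) := (if_pos (by decide : octIdxTbl 1 5 = 6)).trans rfl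
lemma co_1_5_7 : (if octIdxTbl 1 5 = 7 then octSgnTbl 1 5 else 0) = (0:ℝ) := if_neg (by decide : ¬ octIdxTbl 1 5 = 7)
lemma co_1_6_0 : (if octIdxTbl 1 6 = 0 then octSgnTbl 1 6 else 0) = (0:ℝ) := if_neg (by decide : ¬ octIdxTbl 1 6 = 0)
lemma co_1_6_1 : (if octIdxTbl 1 6 = 1 then octSgnTbl 1 6 else 0) = (0:ℝ) := if_neg (by decide : ¬ octIdxTbl 1 6 = 1)
lemma co_1_6_2 : (if octIdxTbl 1 6 = 2 then octSgnTbl 1 6 else 0) = (0:ℝ) := if_neg (by decide : ¬ octIdxTbl 1 6 = 2)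
lemma co_1_6_3 : (if octIdxTbl 1 6 = 3 then octSgnTbl 1 6 else 0) = (0:ℝ) := if_neg (by decide : ¬ octIdxTbl 1 6 = 3)
lemma co_1_6_4 : (if octIdxTbl 1 6 = 4 then octSgnTbl 1 6 else 0) = (0:ℝ) := if_neg (by decide : ¬ octIdxTbl 1 6 = 4)
lemma co_1_6_5 : (if octIdxTbl 1 6 = 5 then octSgnTbl 1 6 else 0) = (-1:ℝ) := (if_pos (by decide : octIdxTbl 1 6 = 5)).trans rfl
lemma co_1_6_6 : (if octIdxTbl 1 6 = 6 then octSgnTbl 1 6 else 0) = (0:ℝ) := if_neg (by decide : ¬ octIdxTbl 1 6 = 6)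
lemma co_1_6_7 : (if octIdxTbl 1 6 = 7 then octSgnTbl 1 6 else 0) = (0:ℝ) := if_neg (by decide : ¬ octIdxTbl 1 6 = 7)
lemma co_1_7_0 : (if octIdxTbl 1 7 = 0 then octSgnTbl 1 7 else 0) = (0:ℝ) := if_neg (by decide : ¬ octIdxTbl 1 7 = 0)
lemma co_1_7_1 : (if octIdxTbl 1 7 = 1 then octSgnTbl 1 7 else 0) = (0:ℝ) := if_neg (by decide : ¬ octIdxTbl 1 7 = 1)
lemma co_1_7_2 : (if octIdxTbl 1 7 = 2 then octSgnTbl 1 7 else 0) = (0:ℝ) := if_neg (by decide : ¬ octIdxTbl 1 7 = 2)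
lemma co_1_7_3 : (if octIdxTbl 1 7 = 3 then octSgnTbl 1 7 else 0) = (-1:ℝ) := (if_pos (by decide : octIdxTbl 1 7 = 3)).trans rfl
lemma co_1_7_4 : (if octIdxTbl 1 7 = 4 then octSgnTbl 1 7 else 0) = (0:ℝ) := if_neg (by decide : ¬ octIdxTbl 1 7 = 4)
lemma co_1_7_5 : (if octIdxTbl 1 7 = 5 then octSgnTbl 1 7 else 0) = (0:ℝ) := if_neg (by decide : ¬ octIdxTbl 1 7 = 5)
lemma co_1_7_6 : (if octIdxTbl 1 7 = 6 then octSgnTbl 1 7 else 0) = (0:ℝ) := if_neg (by decide : ¬ octIdxTbl 1 7 = 6)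
lemma co_1_7_7 : (if octIdxTbl 1 7 = 7 then octSgnTbl 1 7 else 0) = (0:ℝ) := if_neg (by decide : ¬ octIdxTbl 1 7 = 7)
lemma co_2_0_0 : (if octIdxTbl 2 0 = 0 then octSgnTbl 2 0 else 0) = (0:ℝ) := if_neg (by decide : ¬ octIdxTbl 2 0 = 0)
lemma co_2_0_1 : (if octIdxTbl 2 0 = 1 then octSgnTbl 2 0 else 0) = (0:ℝ) := if_neg (by decide : ¬ octIdxTbl 2 0 = 1)
lemma co_2_0_2 : (if octIdxTbl 2 0 = 2 then octSgnTbl 2 0 else 0) = (1:ℝ) := (if_pos (by decide : octIdxTbl 2 0 = 2)).trans rfl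
lemma co_2_0_3 : (if octIdxTbl 2 0 = 3 then octSgnTbl 2 0 else 0) = (0:ℝ) := if_neg (by decide : ¬ octIdxTbl 2 0 = 3)
lemma co_2_0_4 : (if octIdxTbl 2 0 = 4 then octSgnTbl 2 0 else 0) = (0:ℝ) := if_neg (by decide : ¬ octIdxTbl 2 0 = 4)
lemma co_2_0_5 : (if octIdxTbl 2 0 = 5 then octSgnTbl 2 0 else 0) = (0:ℝ) := if_neg (by decide : ¬ octIdxTbl 2 0 = 5)
lemma co_2_0_6 : (if octIdxTbl 2 0 = 6 then octSgnTbl 2 0 else 0) = (0:ℝ) := if_neg (by decide : ¬ octIdxTbl 2 0 = 6)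
lemma co_2_0_7 : (if octIdxTbl 2 0 = 7 then octSgnTbl 2 0 else 0) = (0:ℝ) := if_neg (by decide : ¬ octIdxTbl 2 0 = 7)
lemma co_2_1_0 : (if octIdxTbl 2 1 = 0 then octSgnTbl 2 1 else 0) = (0:ℝ) := if_neg (by decide : ¬ octIdxTbl 2 1 = 0)
lemma co_2_1_1 : (if octIdxTbl 2 1 = 1 then octSgnTbl 2 1 else 0) = (0:ℝ) := if_neg (by decide : ¬ octIdxTbl 2 1 = 1)
lemma co_2_1_2 : (if octIdxTbl 2 1 = 2 then octSgnTbl 2 1 else 0) = (0:ℝ) := if_neg (by decide : ¬ octIdxTbl 2 1 = 2)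
lemma co_2_1_3 : (if octIdxTbl 2 1 = 3 then octSgnTbl 2 1 else 0) = (0:ℝ) := if_neg (by decide : ¬ octIdxTbl 2 1 = 3)
lemma co_2_1_4 : (if octIdxTbl 2 1 = 4 then octSgnTbl 2 1 else 0) = (-1:ℝ) := (if_pos (by decide : octIdxTbl 2 1 = 4)).trans rfl
lemma co_2_1_5 : (if octIdxTbl 2 1 = 5 then octSgnTbl 2 1 else 0) = (0:ℝ) := if_neg (by decide : ¬ octIdxTbl 2 1 = 5)
lemma co_2_1_6 : (if octIdxTbl 2 1 = 6 then octSgnTbl 2 1 else 0) = (0:ℝ) := if_neg (by decide : ¬ octIdxTbl 2 1 = 6)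
lemma co_2_1_7 : (if octIdxTbl 2 1 = 7 then octSgnTbl 2 1 else 0) = (0:ℝ) := if_neg (by decide : ¬ octIdxTbl 2 1 = 7)
lemma co_2_2_0 : (if octIdxTbl 2 2 = 0 then octSgnTbl 2 2 else 0) = (-1:ℝ) := (if_pos (by decide : octIdxTbl 2 2 = 0)).trans rfl
lemma co_2_2_1 : (if octIdxTbl 2 2 = 1 then octSgnTbl 2 2 else 0) = (0:ℝ) := if_neg (by decide : ¬ octIdxTbl 2 2 = 1)
lemma co_2_2_2 : (if octIdxTbl 2 2 = 2 then octSgnTbl 2 2 else 0) = (0:ℝ) := if_neg (by decide : ¬ octIdxTbl 2 2 = 2)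
lemma co_2_2_3 : (if octIdxTbl 2 2 = 3 then octSgnTbl 2 2 else 0) = (0:ℝ) := if_neg (by decide : ¬ octIdxTbl 2 2 = 3)
lemma co_2_2_4 : (if octIdxTbl 2 2 = 4 then octSgnTbl 2 2 else 0) = (0:ℝ) := if_neg (by decide : ¬ octIdxTbl 2 2 = 4)
lemma co_2_2_5 : (if octIdxTbl 2 2 = 5 then octSgnTbl 2 2 else 0) = (0:ℝ) := if_neg (by decide : ¬ octIdxTbl 2 2 = 5)
lemma co_2_2_6 : (if octIdxTbl 2 2 = 6 then octSgnTbl 2 2 else 0) = (0:ℝ) := if_neg (by decide : ¬ octIdxTbl 2 2 = 6)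
lemma co_2_2_7 : (if octIdxTbl 2 2 = 7 then octSgnTbl 2 2 else 0) = (0:ℝ) := if_neg (by decide : ¬ octIdxTbl 2 2 = 7)
lemma co_2_3_0 : (if octIdxTbl 2 3 = 0 then octSgnTbl 2 3 else 0) = (0:ℝ) := if_neg (by decide : ¬ octIdxTbl 2 3 = 0)
lemma co_2_3_1 : (if octIdxTbl 2 3 = 1 then octSgnTbl 2 3 else 0) = (0:ℝ) := if_neg (by decide : ¬ octIdxTbl 2 3 = 1)
lemma co_2_3_2 : (if octIdxTbl 2 3 = 2 then octSgnTbl 2 3 else 0) = (0:ℝ) := if_neg (by decide : ¬ octIdxTbl 2 3 = 2)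
lemma co_2_3_3 : (if octIdxTbl 2 3 = 3 then octSgnTbl 2 3 else 0) = (0:ℝ) := if_neg (by decide : ¬ octIdxTbl 2 3 = 3)
lemma co_2_3_4 : (if octIdxTbl 2 3 = 4 then octSgnTbl 2 3 else 0) = (0:ℝ) := if_neg (by decide : ¬ octIdxTbl 2 3 = 4)
lemma co_2_3_5 : (if octIdxTbl 2 3 = 5 then octSgnTbl 2 3 else 0) = (1:ℝ) := (if_pos (by decide : octIdxTbl 2 3 = 5)).trans rfl
lemma co_2_3_6 : (if octIdxTbl 2 3 = 6 then octSgnTbl 2 3 else 0) = (0:ℝ) := if_neg (by decide : ¬ octIdxTbl 2 3 = 6)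
lemma co_2_3_7 : (if octIdxTbl 2 3 = 7 then octSgnTbl 2 3 else 0) = (0:ℝ) := if_neg (by decide : ¬ octIdxTbl 2 3 = 7)
lemma co_2_4_0 : (if octIdxTbl 2 4 = 0 then octSgnTbl 2 4 else 0) = (0:ℝ) := if_neg (by decide : ¬ octIdxTbl 2 4 = 0)
lemma co_2_4_1 : (if octIdxTbl 2 4 = 1 then octSgnTbl 2 4 else 0) = (1:ℝ) := (if_pos (by decide : octIdxTbl 2 4 = 1)).trans rfl
lemma co_2_4_2 : (if octIdxTbl 2 4 = 2 then octSgnTbl 2 4 else 0) = (0:ℝ) := if_neg (by decide : ¬ octIdxTbl 2 4 = 2)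
lemma co_2_4_3 : (if octIdxTbl 2 4 = 3 then octSgnTbl 2 4 else 0) = (0:ℝ) := if_neg (by decide : ¬ octIdxTbl 2 4 = 3)
lemma co_2_4_4 : (if octIdxTbl 2 4 = 4 then octSgnTbl 2 4 else 0) = (0:ℝ) := if_neg (by decide : ¬ octIdxTbl 2 4 = 4)
lemma co_2_4_5 : (if octIdxTbl 2 4 = 5 then octSgnTbl 2 4 else 0) = (0:ℝ) := if_neg (by decide : ¬ octIdxTbl 2 4 = 5)
lemma co_2_4_6 : (if octIdxTbl 2 4 = 6 then octSgnTbl 2 4 else 0) = (0:ℝ) := if_neg (by decide : ¬ octIdxTbl 2 4 = 6)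
lemma co_2_4_7 : (if octIdxTbl 2 4 = 7 then octSgnTbl 2 4 else 0) = (0:ℝ) := if_neg (by decide : ¬ octIdxTbl 2 4 = 7)
lemma co_2_5_0 : (if octIdxTbl 2 5 = 0 then octSgnTbl 2 5 else 0) = (0:ℝ) := if_neg (by decide : ¬ octIdxTbl 2 5 = 0)
lemma co_2_5_1 : (if octIdxTbl 2 5 = 1 then octSgnTbl 2 5 else 0) = (0:ℝ) := if_neg (by decide : ¬ octIdxTbl 2 5 = 1)
lemma co_2_5_2 : (if octIdxTbl 2 5 = 2 then octSgnTbl 2 5 else 0) = (0:ℝ) := if_neg (by decide : ¬ octIdxTbl 2 5 = 2)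
lemma co_2_5_3 : (if octIdxTbl 2 5 = 3 then octSgnTbl 2 5 else 0) = (-1:ℝ) := (if_pos (by decide : octIdxTbl 2 5 = 3)).trans rfl
lemma co_2_5_4 : (if octIdxTbl 2 5 = 4 then octSgnTbl 2 5 else 0) = (0:ℝ) := if_neg (by decide : ¬ octIdxTbl 2 5 = 4)
lemma co_2_5_5 : (if octIdxTbl 2 5 = 5 then octSgnTbl 2 5 else 0) = (0:ℝ) := if_neg (by decide : ¬ octIdxTbl 2 5 = 5)
lemma co_2_5_6 : (if octIdxTbl 2 5 = 6 then octSgnTbl 2 5 else 0) = (0:ℝ) := if_neg (by decide : ¬ octIdxTbl 2 5 = 6)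
lemma co_2_5_7 : (if octIdxTbl 2 5 = 7 then octSgnTbl 2 5 else 0) = (0:ℝ) := if_neg (by decide : ¬ octIdxTbl 2 5 = 7)
lemma co_2_6_0 : (if octIdxTbl 2 6 = 0 then octSgnTbl 2 6 else 0) = (0:ℝ) := if_neg (by decide : ¬ octIdxTbl 2 6 = 0)
lemma co_2_6_1 : (if octIdxTbl 2 6 = 1 then octSgnTbl 2 6 else 0) = (0:ℝ) := if_neg (by decide : ¬ octIdxTbl 2 6 = 1)
lemma co_2_6_2 : (if octIdxTbl 2 6 = 2 then octSgnTbl 2 6 else 0) = (0:ℝ) := if_neg (by decide : ¬ octIdxTbl 2 6 = 2)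
lemma co_2_6_3 : (if octIdxTbl 2 6 = 3 then octSgnTbl 2 6 else 0) = (0:ℝ) := if_neg (by decide : ¬ octIdxTbl 2 6 = 3)
lemma co_2_6_4 : (if octIdxTbl 2 6 = 4 then octSgnTbl 2 6 else 0) = (0:ℝ) := if_neg (by decide : ¬ octIdxTbl 2 6 = 4)
lemma co_2_6_5 : (if octIdxTbl 2 6 = 5 then octSgnTbl 2 6 else 0) = (0:ℝ) := if_neg (by decide : ¬ octIdxTbl 2 6 = 5)
lemma co_2_6_6 : (if octIdxTbl 2 6 = 6 then octSgnTbl 2 6 else 0) = (0:ℝ) := if_neg (by decide : ¬ octIdxTbl 2 6 = 6)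
lemma co_2_6_7 : (if octIdxTbl 2 6 = 7 then octSgnTbl 2 6 else 0) = (1:ℝ) := (if_pos (by decide : octIdxTbl 2 6 = 7)).trans rfl
lemma co_2_7_0 : (if octIdxTbl 2 7 = 0 then octSgnTbl 2 7 else 0) = (0:ℝ) := if_neg (by decide : ¬ octIdxTbl 2 7 = 0)
lemma co_2_7_1 : (if octIdxTbl 2 7 = 1 then octSgnTbl 2 7 else 0) = (0:ℝ) := if_neg (by decide : ¬ octIdxTbl 2 7 = 1)
lemma co_2_7_2 : (if octIdxTbl 2 7 = 2 then octSgnTbl 2 7 else 0) = (0:ℝ) := if_neg (by decide : ¬ octIdxTbl 2 7 = 2)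
lemma co_2_7_3 : (if octIdxTbl 2 7 = 3 then octSgnTbl 2 7 else 0) = (0:ℝ) := if_neg (by decide : ¬ octIdxTbl 2 7 = 3)
lemma co_2_7_4 : (if octIdxTbl 2 7 = 4 then octSgnTbl 2 7 else 0) = (0:ℝ) := if_neg (by decide : ¬ octIdxTbl 2 7 = 4)
lemma co_2_7_5 : (if octIdxTbl 2 7 = 5 then octSgnTbl 2 7 else 0) = (0:ℝ) := if_neg (by decide : ¬ octIdxTbl 2 7 = 5)
lemma co_2_7_6 : (if octIdxTbl 2 7 = 6 then octSgnTbl 2 7 else 0) = (-1:ℝ) := (if_pos (by decide : octIdxTbl 2 7 = 6)).trans rfl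
lemma co_2_7_7 : (if octIdxTbl 2 7 = 7 then octSgnTbl 2 7 else 0) = (0:ℝ) := if_neg (by decide : ¬ octIdxTbl 2 7 = 7)
lemma co_3_0_0 : (if octIdxTbl 3 0 = 0 then octSgnTbl 3 0 else 0) = (0:ℝ) := if_neg (by decide : ¬ octIdxTbl 3 0 = 0)
lemma co_3_0_1 : (if octIdxTbl 3 0 = 1 then octSgnTbl 3 0 else 0) = (0:ℝ) := if_neg (by decide : ¬ octIdxTbl 3 0 = 1)
lemma co_3_0_2 : (if octIdxTbl 3 0 = 2 then octSgnTbl 3 0 else 0) = (0:ℝ) := if_neg (by decide : ¬ octIdxTbl 3 0 = 2)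
lemma co_3_0_3 : (if octIdxTbl 3 0 = 3 then octSgnTbl 3 0 else 0) = (1:ℝ) := (if_pos (by decide : octIdxTbl 3 0 = 3)).trans rfl
lemma co_3_0_4 : (if octIdxTbl 3 0 = 4 then octSgnTbl 3 0 else 0) = (0:ℝ) := if_neg (by decide : ¬ octIdxTbl 3 0 = 4)
lemma co_3_0_5 : (if octIdxTbl 3 0 = 5 then octSgnTbl 3 0 else 0) = (0:ℝ) := if_neg (by decide : ¬ octIdxTbl 3 0 = 5)
lemma co_3_0_6 : (if octIdxTbl 3 0 = 6 then octSgnTbl 3 0 else 0) = (0:ℝ) := if_neg (by decide : ¬ octIdxTbl 3 0 = 6)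
lemma co_3_0_7 : (if octIdxTbl 3 0 = 7 then octSgnTbl 3 0 else 0) = (0:ℝ) := if_neg (by decide : ¬ octIdxTbl 3 0 = 7)
lemma co_3_1_0 : (if octIdxTbl 3 1 = 0 then octSgnTbl 3 1 else 0) = (0:ℝ) := if_neg (by decide : ¬ octIdxTbl 3 1 = 0)
lemma co_3_1_1 : (if octIdxTbl 3 1 = 1 then octSgnTbl 3 1 else 0) = (0:ℝ) := if_neg (by decide : ¬ octIdxTbl 3 1 = 1)
lemma co_3_1_2 : (if octIdxTbl 3 1 = 2 then octSgnTbl 3 1 else 0) = (0:ℝ) := if_neg (by decide : ¬ octIdxTbl 3 1 = 2)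
lemma co_3_1_3 : (if octIdxTbl 3 1 = 3 then octSgnTbl 3 1 else 0) = (0:ℝ) := if_neg (by decide : ¬ octIdxTbl 3 1 = 3)
lemma co_3_1_4 : (if octIdxTbl 3 1 = 4 then octSgnTbl 3 1 else 0) = (0:ℝ) := if_neg (by decide : ¬ octIdxTbl 3 1 = 4)
lemma co_3_1_5 : (if octIdxTbl 3 1 = 5 then octSgnTbl 3 1 else 0) = (0:ℝ) := if_neg (by decide : ¬ octIdxTbl 3 1 = 5)
lemma co_3_1_6 : (if octIdxTbl 3 1 = 6 then octSgnTbl 3 1 else 0) = (0:ℝ) := if_neg (by decide : ¬ octIdxTbl 3 1 = 6)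
lemma co_3_1_7 : (if octIdxTbl 3 1 = 7 then octSgnTbl 3 1 else 0) = (-1:ℝ) := (if_pos (by decide : octIdxTbl 3 1 = 7)).trans rfl
lemma co_3_2_0 : (if octIdxTbl 3 2 = 0 then octSgnTbl 3 2 else 0) = (0:ℝ) := if_neg (by decide : ¬ octIdxTbl 3 2 = 0)
lemma co_3_2_1 : (if octIdxTbl 3 2 = 1 then octSgnTbl 3 2 else 0) = (0:ℝ) := if_neg (by decide : ¬ octIdxTbl 3 2 = 1)
lemma co_3_2_2 : (if octIdxTbl 3 2 = 2 then octSgnTbl 3 2 else 0) = (0:ℝ) := if_neg (by decide : ¬ octIdxTbl 3 2 = 2)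
lemma co_3_2_3 : (if octIdxTbl 3 2 = 3 then octSgnTbl 3 2 else 0) = (0:ℝ) := if_neg (by decide : ¬ octIdxTbl 3 2 = 3)
lemma co_3_2_4 : (if octIdxTbl 3 2 = 4 then octSgnTbl 3 2 else 0) = (0:ℝ) := if_neg (by decide : ¬ octIdxTbl 3 2 = 4)
lemma co_3_2_5 : (if octIdxTbl 3 2 = 5 then octSgnTbl 3 2 else 0) = (-1:ℝ) := (if_pos (by decide : octIdxTbl 3 2 = 5)).trans rfl
lemma co_3_2_6 : (if octIdxTbl 3 2 = 6 then octSgnTbl 3 2 else 0) = (0:ℝ) := if_neg (by decide : ¬ octIdxTbl 3 2 = 6)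
lemma co_3_2_7 : (if octIdxTbl 3 2 = 7 then octSgnTbl 3 2 else 0) = (0:ℝ) := if_neg (by decide : ¬ octIdxTbl 3 2 = 7)
lemma co_3_3_0 : (if octIdxTbl 3 3 = 0 then octSgnTbl 3 3 else 0) = (-1:ℝ) := (if_pos (by decide : octIdxTbl 3 3 = 0)).trans rfl
lemma co_3_3_1 : (if octIdxTbl 3 3 = 1 then octSgnTbl 3 3 else 0) = (0:ℝ) := if_neg (by decide : ¬ octIdxTbl 3 3 = 1)
lemma co_3_3_2 : (if octIdxTbl 3 3 = 2 then octSgnTbl 3 3 else 0) = (0:ℝ) := if_neg (by decide : ¬ octIdxTbl 3 3 = 2)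
lemma co_3_3_3 : (if octIdxTbl 3 3 = 3 then octSgnTbl 3 3 else 0) = (0:ℝ) := if_neg (by decide : ¬ octIdxTbl 3 3 = 3)
lemma co_3_3_4 : (if octIdxTbl 3 3 = 4 then octSgnTbl 3 3 else 0) = (0:ℝ) := if_neg (by decide : ¬ octIdxTbl 3 3 = 4)
lemma co_3_3_5 : (if octIdxTbl 3 3 = 5 then octSgnTbl 3 3 else 0) = (0:ℝ) := if_neg (by decide : ¬ octIdxTbl 3 3 = 5)
lemma co_3_3_6 : (if octIdxTbl 3 3 = 6 then octSgnTbl 3 3 else 0) = (0:ℝ) := if_neg (by decide : ¬ octIdxTbl 3 3 = 6)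
lemma co_3_3_7 : (if octIdxTbl 3 3 = 7 then octSgnTbl 3 3 else 0) = (0:ℝ) := if_neg (by decide : ¬ octIdxTbl 3 3 = 7)
lemma co_3_4_0 : (if octIdxTbl 3 4 = 0 then octSgnTbl 3 4 else 0) = (0:ℝ) := if_neg (by decide : ¬ octIdxTbl 3 4 = 0)
lemma co_3_4_1 : (if octIdxTbl 3 4 = 1 then octSgnTbl 3 4 else 0) = (0:ℝ) := if_neg (by decide : ¬ octIdxTbl 3 4 = 1)
lemma co_3_4_2 : (if octIdxTbl 3 4 = 2 then octSgnTbl 3 4 else 0) = (0:ℝ) := if_neg (by decide : ¬ octIdxTbl 3 4 = 2)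
lemma co_3_4_3 : (if octIdxTbl 3 4 = 3 then octSgnTbl 3 4 else 0) = (0:ℝ) := if_neg (by decide : ¬ octIdxTbl 3 4 = 3)
lemma co_3_4_4 : (if octIdxTbl 3 4 = 4 then octSgnTbl 3 4 else 0) = (0:ℝ) := if_neg (by decide : ¬ octIdxTbl 3 4 = 4)
lemma co_3_4_5 : (if octIdxTbl 3 4 = 5 then octSgnTbl 3 4 else 0) = (0:ℝ) := if_neg (by decide : ¬ octIdxTbl 3 4 = 5)
lemma co_3_4_6 : (if octIdxTbl 3 4 = 6 then octSgnTbl 3 4 else 0) = (1:ℝ) := (if_pos (by decide : octIdxTbl 3 4 = 6)).trans rfl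
lemma co_3_4_7 : (if octIdxTbl 3 4 = 7 then octSgnTbl 3 4 else 0) = (0:ℝ) := if_neg (by decide : ¬ octIdxTbl 3 4 = 7)
lemma co_3_5_0 : (if octIdxTbl 3 5 = 0 then octSgnTbl 3 5 else 0) = (0:ℝ) := if_neg (by decide : ¬ octIdxTbl 3 5 = 0)
lemma co_3_5_1 : (if octIdxTbl 3 5 = 1 then octSgnTbl 3 5 else 0) = (0:ℝ) := if_neg (by decide : ¬ octIdxTbl 3 5 = 1)
lemma co_3_5_2 : (if octIdxTbl 3 5 = 2 then octSgnTbl 3 5 else 0) = (1:ℝ) := (if_pos (by decide : octIdxTbl 3 5 = 2)).trans rfl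
lemma co_3_5_3 : (if octIdxTbl 3 5 = 3 then octSgnTbl 3 5 else 0) = (0:ℝ) := if_neg (by decide : ¬ octIdxTbl 3 5 = 3)
lemma co_3_5_4 : (if octIdxTbl 3 5 = 4 then octSgnTbl 3 5 else 0) = (0:ℝ) := if_neg (by decide : ¬ octIdxTbl 3 5 = 4)
lemma co_3_5_5 : (if octIdxTbl 3 5 = 5 then octSgnTbl 3 5 else 0) = (0:ℝ) := if_neg (by decide : ¬ octIdxTbl 3 5 = 5)
lemma co_3_5_6 : (if octIdxTbl 3 5 = 6 then octSgnTbl 3 5 else 0) = (0:ℝ) := if_neg (by decide : ¬ octIdxTbl 3 5 = 6)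
lemma co_3_5_7 : (if octIdxTbl 3 5 = 7 then octSgnTbl 3 5 else 0) = (0:ℝ) := if_neg (by decide : ¬ octIdxTbl 3 5 = 7)
lemma co_3_6_0 : (if octIdxTbl 3 6 = 0 then octSgnTbl 3 6 else 0) = (0:ℝ) := if_neg (by decide : ¬ octIdxTbl 3 6 = 0)
lemma co_3_6_1 : (if octIdxTbl 3 6 = 1 then octSgnTbl 3 6 else 0) = (0:ℝ) := if_neg (by decide : ¬ octIdxTbl 3 6 = 1)
lemma co_3_6_2 : (if octIdxTbl 3 6 = 2 then octSgnTbl 3 6 else 0) = (0:ℝ) := if_neg (by decide : ¬ octIdxTbl 3 6 = 2)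
lemma co_3_6_3 : (if octIdxTbl 3 6 = 3 then octSgnTbl 3 6 else 0) = (0:ℝ) := if_neg (by decide : ¬ octIdxTbl 3 6 = 3)
lemma co_3_6_4 : (if octIdxTbl 3 6 = 4 then octSgnTbl 3 6 else 0) = (-1:ℝ) := (if_pos (by decide : octIdxTbl 3 6 = 4)).trans rfl
lemma co_3_6_5 : (if octIdxTbl 3 6 = 5 then octSgnTbl 3 6 else 0) = (0:ℝ) := if_neg (by decide : ¬ octIdxTbl 3 6 = 5)
lemma co_3_6_6 : (if octIdxTbl 3 6 = 6 then octSgnTbl 3 6 else 0) = (0:ℝ) := if_neg (by decide : ¬ octIdxTbl 3 6 = 6)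
lemma co_3_6_7 : (if octIdxTbl 3 6 = 7 then octSgnTbl 3 6 else 0) = (0:ℝ) := if_neg (by decide : ¬ octIdxTbl 3 6 = 7)
lemma co_3_7_0 : (if octIdxTbl 3 7 = 0 then octSgnTbl 3 7 else 0) = (0:ℝ) := if_neg (by decide : ¬ octIdxTbl 3 7 = 0)
lemma co_3_7_1 : (if octIdxTbl 3 7 = 1 then octSgnTbl 3 7 else 0) = (1:ℝ) := (if_pos (by decide : octIdxTbl 3 7 = 1)).trans rfl
lemma co_3_7_2 : (if octIdxTbl 3 7 = 2 then octSgnTbl 3 7 else 0) = (0:ℝ) := if_neg (by decide : ¬ octIdxTbl 3 7 = 2)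
lemma co_3_7_3 : (if octIdxTbl 3 7 = 3 then octSgnTbl 3 7 else 0) = (0:ℝ) := if_neg (by decide : ¬ octIdxTbl 3 7 = 3)
lemma co_3_7_4 : (if octIdxTbl 3 7 = 4 then octSgnTbl 3 7 else 0) = (0:ℝ) := if_neg (by decide : ¬ octIdxTbl 3 7 = 4)
lemma co_3_7_5 : (if octIdxTbl 3 7 = 5 then octSgnTbl 3 7 else 0) = (0:ℝ) := if_neg (by decide : ¬ octIdxTbl 3 7 = 5)
lemma co_3_7_6 : (if octIdxTbl 3 7 = 6 then octSgnTbl 3 7 else 0) = (0:ℝ) := if_neg (by decide : ¬ octIdxTbl 3 7 = 6)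
lemma co_3_7_7 : (if octIdxTbl 3 7 = 7 then octSgnTbl 3 7 else 0) = (0:ℝ) := if_neg (by decide : ¬ octIdxTbl 3 7 = 7)
lemma co_4_0_0 : (if octIdxTbl 4 0 = 0 then octSgnTbl 4 0 else 0) = (0:ℝ) := if_neg (by decide : ¬ octIdxTbl 4 0 = 0)
lemma co_4_0_1 : (if octIdxTbl 4 0 = 1 then octSgnTbl 4 0 else 0) = (0:ℝ) := if_neg (by decide : ¬ octIdxTbl 4 0 = 1)
lemma co_4_0_2 : (if octIdxTbl 4 0 = 2 then octSgnTbl 4 0 else 0) = (0:ℝ) := if_neg (by decide : ¬ octIdxTbl 4 0 = 2)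
lemma co_4_0_3 : (if octIdxTbl 4 0 = 3 then octSgnTbl 4 0 else 0) = (0:ℝ) := if_neg (by decide : ¬ octIdxTbl 4 0 = 3)
lemma co_4_0_4 : (if octIdxTbl 4 0 = 4 then octSgnTbl 4 0 else 0) = (1:ℝ) := (if_pos (by decide : octIdxTbl 4 0 = 4)).trans rfl
lemma co_4_0_5 : (if octIdxTbl 4 0 = 5 then octSgnTbl 4 0 else 0) = (0:ℝ) := if_neg (by decide : ¬ octIdxTbl 4 0 = 5)
lemma co_4_0_6 : (if octIdxTbl 4 0 = 6 then octSgnTbl 4 0 else 0) = (0:ℝ) := if_neg (by decide : ¬ octIdxTbl 4 0 = 6)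
lemma co_4_0_7 : (if octIdxTbl 4 0 = 7 then octSgnTbl 4 0 else 0) = (0:ℝ) := if_neg (by decide : ¬ octIdxTbl 4 0 = 7)
lemma co_4_1_0 : (if octIdxTbl 4 1 = 0 then octSgnTbl 4 1 else 0) = (0:ℝ) := if_neg (by decide : ¬ octIdxTbl 4 1 = 0)
lemma co_4_1_1 : (if octIdxTbl 4 1 = 1 then octSgnTbl 4 1 else 0) = (0:ℝ) := if_neg (by decide : ¬ octIdxTbl 4 1 = 1)
lemma co_4_1_2 : (if octIdxTbl 4 1 = 2 then octSgnTbl 4 1 else 0) = (1:ℝ) := (if_pos (by decide : octIdxTbl 4 1 = 2)).trans rfl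
lemma co_4_1_3 : (if octIdxTbl 4 1 = 3 then octSgnTbl 4 1 else 0) = (0:ℝ) := if_neg (by decide : ¬ octIdxTbl 4 1 = 3)
lemma co_4_1_4 : (if octIdxTbl 4 1 = 4 then octSgnTbl 4 1 else 0) = (0:ℝ) := if_neg (by decide : ¬ octIdxTbl 4 1 = 4)
lemma co_4_1_5 : (if octIdxTbl 4 1 = 5 then octSgnTbl 4 1 else 0) = (0:ℝ) := if_neg (by decide : ¬ octIdxTbl 4 1 = 5)
lemma co_4_1_6 : (if octIdxTbl 4 1 = 6 then octSgnTbl 4 1 else 0) = (0:ℝ) := if_neg (by decide : ¬ octIdxTbl 4 1 = 6)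
lemma co_4_1_7 : (if octIdxTbl 4 1 = 7 then octSgnTbl 4 1 else 0) = (0:ℝ) := if_neg (by decide : ¬ octIdxTbl 4 1 = 7)
lemma co_4_2_0 : (if octIdxTbl 4 2 = 0 then octSgnTbl 4 2 else 0) = (0:ℝ) := if_neg (by decide : ¬ octIdxTbl 4 2 = 0)
lemma co_4_2_1 : (if octIdxTbl 4 2 = 1 then octSgnTbl 4 2 else 0) = (-1:ℝ) := (if_pos (by decide : octIdxTbl 4 2 = 1)).trans rfl
lemma co_4_2_2 : (if octIdxTbl 4 2 = 2 then octSgnTbl 4 2 else 0) = (0:ℝ) := if_neg (by decide : ¬ octIdxTbl 4 2 = 2)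
lemma co_4_2_3 : (if octIdxTbl 4 2 = 3 then octSgnTbl 4 2 else 0) = (0:ℝ) := if_neg (by decide : ¬ octIdxTbl 4 2 = 3)
lemma co_4_2_4 : (if octIdxTbl 4 2 = 4 then octSgnTbl 4 2 else 0) = (0:ℝ) := if_neg (by decide : ¬ octIdxTbl 4 2 = 4)
lemma co_4_2_5 : (if octIdxTbl 4 2 = 5 then octSgnTbl 4 2 else 0) = (0:ℝ) := if_neg (by decide : ¬ octIdxTbl 4 2 = 5)
lemma co_4_2_6 : (if octIdxTbl 4 2 = 6 then octSgnTbl 4 2 else 0) = (0:ℝ) := if_neg (by decide : ¬ octIdxTbl 4 2 = 6)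
lemma co_4_2_7 : (if octIdxTbl 4 2 = 7 then octSgnTbl 4 2 else 0) = (0:ℝ) := if_neg (by decide : ¬ octIdxTbl 4 2 = 7)
lemma co_4_3_0 : (if octIdxTbl 4 3 = 0 then octSgnTbl 4 3 else 0) = (0:ℝ) := if_neg (by decide : ¬ octIdxTbl 4 3 = 0)
lemma co_4_3_1 : (if octIdxTbl 4 3 = 1 then octSgnTbl 4 3 else 0) = (0:ℝ) := if_neg (by decide : ¬ octIdxTbl 4 3 = 1)
lemma co_4_3_2 : (if octIdxTbl 4 3 = 2 then octSgnTbl 4 3 else 0) = (0:ℝ) := if_neg (by decide : ¬ octIdxTbl 4 3 = 2)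
lemma co_4_3_3 : (if octIdxTbl 4 3 = 3 then octSgnTbl 4 3 else 0) = (0:ℝ) := if_neg (by decide : ¬ octIdxTbl 4 3 = 3)
lemma co_4_3_4 : (if octIdxTbl 4 3 = 4 then octSgnTbl 4 3 else 0) = (0:ℝ) := if_neg (by decide : ¬ octIdxTbl 4 3 = 4)
lemma co_4_3_5 : (if octIdxTbl 4 3 = 5 then octSgnTbl 4 3 else 0) = (0:ℝ) := if_neg (by decide : ¬ octIdxTbl 4 3 = 5)
lemma co_4_3_6 : (if octIdxTbl 4 3 = 6 then octSgnTbl 4 3 else 0) = (-1:ℝ) := (if_pos (by decide : octIdxTbl 4 3 = 6)).trans rfl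
lemma co_4_3_7 : (if octIdxTbl 4 3 = 7 then octSgnTbl 4 3 else 0) = (0:ℝ) := if_neg (by decide : ¬ octIdxTbl 4 3 = 7)
lemma co_4_4_0 : (if octIdxTbl 4 4 = 0 then octSgnTbl 4 4 else 0) = (-1:ℝ) := (if_pos (by decide : octIdxTbl 4 4 = 0)).trans rfl
lemma co_4_4_1 : (if octIdxTbl 4 4 = 1 then octSgnTbl 4 4 else 0) = (0:ℝ) := if_neg (by decide : ¬ octIdxTbl 4 4 = 1)
lemma co_4_4_2 : (if octIdxTbl 4 4 = 2 then octSgnTbl 4 4 else 0) = (0:ℝ) := if_neg (by decide : ¬ octIdxTbl 4 4 = 2)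
lemma co_4_4_3 : (if octIdxTbl 4 4 = 3 then octSgnTbl 4 4 else 0) = (0:ℝ) := if_neg (by decide : ¬ octIdxTbl 4 4 = 3)
lemma co_4_4_4 : (if octIdxTbl 4 4 = 4 then octSgnTbl 4 4 else 0) = (0:ℝ) := if_neg (by decide : ¬ octIdxTbl 4 4 = 4)
lemma co_4_4_5 : (if octIdxTbl 4 4 = 5 then octSgnTbl 4 4 else 0) = (0:ℝ) := if_neg (by decide : ¬ octIdxTbl 4 4 = 5)
lemma co_4_4_6 : (if octIdxTbl 4 4 = 6 then octSgnTbl 4 4 else 0) = (0:ℝ) := if_neg (by decide : ¬ octIdxTbl 4 4 = 6)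
lemma co_4_4_7 : (if octIdxTbl 4 4 = 7 then octSgnTbl 4 4 else 0) = (0:ℝ) := if_neg (by decide : ¬ octIdxTbl 4 4 = 7)
lemma co_4_5_0 : (if octIdxTbl 4 5 = 0 then octSgnTbl 4 5 else 0) = (0:ℝ) := if_neg (by decide : ¬ octIdxTbl 4 5 = 0)
lemma co_4_5_1 : (if octIdxTbl 4 5 = 1 then octSgnTbl 4 5 else 0) = (0:ℝ) := if_neg (by decide : ¬ octIdxTbl 4 5 = 1)
lemma co_4_5_2 : (if octIdxTbl 4 5 = 2 then octSgnTbl 4 5 else 0) = (0:ℝ) := if_neg (by decide : ¬ octIdxTbl 4 5 = 2)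
lemma co_4_5_3 : (if octIdxTbl 4 5 = 3 then octSgnTbl 4 5 else 0) = (0:ℝ) := if_neg (by decide : ¬ octIdxTbl 4 5 = 3)
lemma co_4_5_4 : (if octIdxTbl 4 5 = 4 then octSgnTbl 4 5 else 0) = (0:ℝ) := if_neg (by decide : ¬ octIdxTbl 4 5 = 4)
lemma co_4_5_5 : (if octIdxTbl 4 5 = 5 then octSgnTbl 4 5 else 0) = (0:ℝ) := if_neg (by decide : ¬ octIdxTbl 4 5 = 5)
lemma co_4_5_6 : (if octIdxTbl 4 5 = 6 then octSgnTbl 4 5 else 0) = (0:ℝ) := if_neg (by decide : ¬ octIdxTbl 4 5 = 6)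
lemma co_4_5_7 : (if octIdxTbl 4 5 = 7 then octSgnTbl 4 5 else 0) = (1:ℝ) := (if_pos (by decide : octIdxTbl 4 5 = 7)).trans rfl
lemma co_4_6_0 : (if octIdxTbl 4 6 = 0 then octSgnTbl 4 6 else 0) = (0:ℝ) := if_neg (by decide : ¬ octIdxTbl 4 6 = 0)
lemma co_4_6_1 : (if octIdxTbl 4 6 = 1 then octSgnTbl 4 6 else 0) = (0:ℝ) := if_neg (by decide : ¬ octIdxTbl 4 6 = 1)
lemma co_4_6_2 : (if octIdxTbl 4 6 = 2 then octSgnTbl 4 6 else 0) = (0:ℝ) := if_neg (by decide : ¬ octIdxTbl 4 6 = 2)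
lemma co_4_6_3 : (if octIdxTbl 4 6 = 3 then octSgnTbl 4 6 else 0) = (1:ℝ) := (if_pos (by decide : octIdxTbl 4 6 = 3)).trans rfl
lemma co_4_6_4 : (if octIdxTbl 4 6 = 4 then octSgnTbl 4 6 else 0) = (0:ℝ) := if_neg (by decide : ¬ octIdxTbl 4 6 = 4)
lemma co_4_6_5 : (if octIdxTbl 4 6 = 5 then octSgnTbl 4 6 else 0) = (0:ℝ) := if_neg (by decide : ¬ octIdxTbl 4 6 = 5)
lemma co_4_6_6 : (if octIdxTbl 4 6 = 6 then octSgnTbl 4 6 else 0) = (0:ℝ) := if_neg (by decide : ¬ octIdxTbl 4 6 = 6)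
lemma co_4_6_7 : (if octIdxTbl 4 6 = 7 then octSgnTbl 4 6 else 0) = (0:ℝ) := if_neg (by decide : ¬ octIdxTbl 4 6 = 7)
lemma co_4_7_0 : (if octIdxTbl 4 7 = 0 then octSgnTbl 4 7 else 0) = (0:ℝ) := if_neg (by decide : ¬ octIdxTbl 4 7 = 0)
lemma co_4_7_1 : (if octIdxTbl 4 7 = 1 then octSgnTbl 4 7 else 0) = (0:ℝ) := if_neg (by decide : ¬ octIdxTbl 4 7 = 1)
lemma co_4_7_2 : (if octIdxTbl 4 7 = 2 then octSgnTbl 4 7 else 0) = (0:ℝ) := if_neg (by decide : ¬ octIdxTbl 4 7 = 2)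
lemma co_4_7_3 : (if octIdxTbl 4 7 = 3 then octSgnTbl 4 7 else 0) = (0:ℝ) := if_neg (by decide : ¬ octIdxTbl 4 7 = 3)
lemma co_4_7_4 : (if octIdxTbl 4 7 = 4 then octSgnTbl 4 7 else 0) = (0:ℝ) := if_neg (by decide : ¬ octIdxTbl 4 7 = 4)
lemma co_4_7_5 : (if octIdxTbl 4 7 = 5 then octSgnTbl 4 7 else 0) = (-1:ℝ) := (if_pos (by decide : octIdxTbl 4 7 = 5)).trans rfl
lemma co_4_7_6 : (if octIdxTbl 4 7 = 6 then octSgnTbl 4 7 else 0) = (0:ℝ) := if_neg (by decide : ¬ octIdxTbl 4 7 = 6)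
lemma co_4_7_7 : (if octIdxTbl 4 7 = 7 then octSgnTbl 4 7 else 0) = (0:ℝ) := if_neg (by decide : ¬ octIdxTbl 4 7 = 7)
lemma co_5_0_0 : (if octIdxTbl 5 0 = 0 then octSgnTbl 5 0 else 0) = (0:ℝ) := if_neg (by decide : ¬ octIdxTbl 5 0 = 0)
lemma co_5_0_1 : (if octIdxTbl 5 0 = 1 then octSgnTbl 5 0 else 0) = (0:ℝ) := if_neg (by decide : ¬ octIdxTbl 5 0 = 1)
lemma co_5_0_2 : (if octIdxTbl 5 0 = 2 then octSgnTbl 5 0 else 0) = (0:ℝ) := if_neg (by decide : ¬ octIdxTbl 5 0 = 2)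
lemma co_5_0_3 : (if octIdxTbl 5 0 = 3 then octSgnTbl 5 0 else 0) = (0:ℝ) := if_neg (by decide : ¬ octIdxTbl 5 0 = 3)
lemma co_5_0_4 : (if octIdxTbl 5 0 = 4 then octSgnTbl 5 0 else 0) = (0:ℝ) := if_neg (by decide : ¬ octIdxTbl 5 0 = 4)
lemma co_5_0_5 : (if octIdxTbl 5 0 = 5 then octSgnTbl 5 0 else 0) = (1:ℝ) := (if_pos (by decide : octIdxTbl 5 0 = 5)).trans rfl
lemma co_5_0_6 : (if octIdxTbl 5 0 = 6 then octSgnTbl 5 0 else 0) = (0:ℝ) := if_neg (by decide : ¬ octIdxTbl 5 0 = 6)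
lemma co_5_0_7 : (if octIdxTbl 5 0 = 7 then octSgnTbl 5 0 else 0) = (0:ℝ) := if_neg (by decide : ¬ octIdxTbl 5 0 = 7)
lemma co_5_1_0 : (if octIdxTbl 5 1 = 0 then octSgnTbl 5 1 else 0) = (0:ℝ) := if_neg (by decide : ¬ octIdxTbl 5 1 = 0)
lemma co_5_1_1 : (if octIdxTbl 5 1 = 1 then octSgnTbl 5 1 else 0) = (0:ℝ) := if_neg (by decide : ¬ octIdxTbl 5 1 = 1)
lemma co_5_1_2 : (if octIdxTbl 5 1 = 2 then octSgnTbl 5 1 else 0) = (0:ℝ) := if_neg (by decide : ¬ octIdxTbl 5 1 = 2)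
lemma co_5_1_3 : (if octIdxTbl 5 1 = 3 then octSgnTbl 5 1 else 0) = (0:ℝ) := if_neg (by decide : ¬ octIdxTbl 5 1 = 3)
lemma co_5_1_4 : (if octIdxTbl 5 1 = 4 then octSgnTbl 5 1 else 0) = (0:ℝ) := if_neg (by decide : ¬ octIdxTbl 5 1 = 4)
lemma co_5_1_5 : (if octIdxTbl 5 1 = 5 then octSgnTbl 5 1 else 0) = (0:ℝ) := if_neg (by decide : ¬ octIdxTbl 5 1 = 5)
lemma co_5_1_6 : (if octIdxTbl 5 1 = 6 then octSgnTbl 5 1 else 0) = (-1:ℝ) := (if_pos (by decide : octIdxTbl 5 1 = 6)).trans rfl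
lemma co_5_1_7 : (if octIdxTbl 5 1 = 7 then octSgnTbl 5 1 else 0) = (0:ℝ) := if_neg (by decide : ¬ octIdxTbl 5 1 = 7)
lemma co_5_2_0 : (if octIdxTbl 5 2 = 0 then octSgnTbl 5 2 else 0) = (0:ℝ) := if_neg (by decide : ¬ octIdxTbl 5 2 = 0)
lemma co_5_2_1 : (if octIdxTbl 5 2 = 1 then octSgnTbl 5 2 else 0) = (0:ℝ) := if_neg (by decide : ¬ octIdxTbl 5 2 = 1)
lemma co_5_2_2 : (if octIdxTbl 5 2 = 2 then octSgnTbl 5 2 else 0) = (0:ℝ) := if_neg (by decide : ¬ octIdxTbl 5 2 = 2)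
lemma co_5_2_3 : (if octIdxTbl 5 2 = 3 then octSgnTbl 5 2 else 0) = (1:ℝ) := (if_pos (by decide : octIdxTbl 5 2 = 3)).trans rfl
lemma co_5_2_4 : (if octIdxTbl 5 2 = 4 then octSgnTbl 5 2 else 0) = (0:ℝ) := if_neg (by decide : ¬ octIdxTbl 5 2 = 4)
lemma co_5_2_5 : (if octIdxTbl 5 2 = 5 then octSgnTbl 5 2 else 0) = (0:ℝ) := if_neg (by decide : ¬ octIdxTbl 5 2 = 5)
lemma co_5_2_6 : (if octIdxTbl 5 2 = 6 then octSgnTbl 5 2 else 0) = (0:ℝ) := if_neg (by decide : ¬ octIdxTbl 5 2 = 6)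
lemma co_5_2_7 : (if octIdxTbl 5 2 = 7 then octSgnTbl 5 2 else 0) = (0:ℝ) := if_neg (by decide : ¬ octIdxTbl 5 2 = 7)
lemma co_5_3_0 : (if octIdxTbl 5 3 = 0 then octSgnTbl 5 3 else 0) = (0:ℝ) := if_neg (by decide : ¬ octIdxTbl 5 3 = 0)
lemma co_5_3_1 : (if octIdxTbl 5 3 = 1 then octSgnTbl 5 3 else 0) = (0:ℝ) := if_neg (by decide : ¬ octIdxTbl 5 3 = 1)
lemma co_5_3_2 : (if octIdxTbl 5 3 = 2 then octSgnTbl 5 3 else 0) = (-1:ℝ) := (if_pos (by decide : octIdxTbl 5 3 = 2)).trans rfl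
lemma co_5_3_3 : (if octIdxTbl 5 3 = 3 then octSgnTbl 5 3 else 0) = (0:ℝ) := if_neg (by decide : ¬ octIdxTbl 5 3 = 3)
lemma co_5_3_4 : (if octIdxTbl 5 3 = 4 then octSgnTbl 5 3 else 0) = (0:ℝ) := if_neg (by decide : ¬ octIdxTbl 5 3 = 4)
lemma co_5_3_5 : (if octIdxTbl 5 3 = 5 then octSgnTbl 5 3 else 0) = (0:ℝ) := if_neg (by decide : ¬ octIdxTbl 5 3 = 5)
lemma co_5_3_6 : (if octIdxTbl 5 3 = 6 then octSgnTbl 5 3 else 0) = (0:ℝ) := if_neg (by decide : ¬ octIdxTbl 5 3 = 6)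
lemma co_5_3_7 : (if octIdxTbl 5 3 = 7 then octSgnTbl 5 3 else 0) = (0:ℝ) := if_neg (by decide : ¬ octIdxTbl 5 3 = 7)
lemma co_5_4_0 : (if octIdxTbl 5 4 = 0 then octSgnTbl 5 4 else 0) = (0:ℝ) := if_neg (by decide : ¬ octIdxTbl 5 4 = 0)
lemma co_5_4_1 : (if octIdxTbl 5 4 = 1 then octSgnTbl 5 4 else 0) = (0:ℝ) := if_neg (by decide : ¬ octIdxTbl 5 4 = 1)
lemma co_5_4_2 : (if octIdxTbl 5 4 = 2 then octSgnTbl 5 4 else 0) = (0:ℝ) := if_neg (by decide : ¬ octIdxTbl 5 4 = 2)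
lemma co_5_4_3 : (if octIdxTbl 5 4 = 3 then octSgnTbl 5 4 else 0) = (0:ℝ) := if_neg (by decide : ¬ octIdxTbl 5 4 = 3)
lemma co_5_4_4 : (if octIdxTbl 5 4 = 4 then octSgnTbl 5 4 else 0) = (0:ℝ) := if_neg (by decide : ¬ octIdxTbl 5 4 = 4)
lemma co_5_4_5 : (if octIdxTbl 5 4 = 5 then octSgnTbl 5 4 else 0) = (0:ℝ) := if_neg (by decide : ¬ octIdxTbl 5 4 = 5)
lemma co_5_4_6 : (if octIdxTbl 5 4 = 6 then octSgnTbl 5 4 else 0) = (0:ℝ) := if_neg (by decide : ¬ octIdxTbl 5 4 = 6)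
lemma co_5_4_7 : (if octIdxTbl 5 4 = 7 then octSgnTbl 5 4 else 0) = (-1:ℝ) := (if_pos (by decide : octIdxTbl 5 4 = 7)).trans rfl
lemma co_5_5_0 : (if octIdxTbl 5 5 = 0 then octSgnTbl 5 5 else 0) = (-1:ℝ) := (if_pos (by decide : octIdxTbl 5 5 = 0)).trans rfl
lemma co_5_5_1 : (if octIdxTbl 5 5 = 1 then octSgnTbl 5 5 else 0) = (0:ℝ) := if_neg (by decide : ¬ octIdxTbl 5 5 = 1)
lemma co_5_5_2 : (if octIdxTbl 5 5 = 2 then octSgnTbl 5 5 else 0) = (0:ℝ) := if_neg (by decide : ¬ octIdxTbl 5 5 = 2)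
lemma co_5_5_3 : (if octIdxTbl 5 5 = 3 then octSgnTbl 5 5 else 0) = (0:ℝ) := if_neg (by decide : ¬ octIdxTbl 5 5 = 3)
lemma co_5_5_4 : (if octIdxTbl 5 5 = 4 then octSgnTbl 5 5 else 0) = (0:ℝ) := if_neg (by decide : ¬ octIdxTbl 5 5 = 4)
lemma co_5_5_5 : (if octIdxTbl 5 5 = 5 then octSgnTbl 5 5 else 0) = (0:ℝ) := if_neg (by decide : ¬ octIdxTbl 5 5 = 5)
lemma co_5_5_6 : (if octIdxTbl 5 5 = 6 then octSgnTbl 5 5 else 0) = (0:ℝ) := if_neg (by decide : ¬ octIdxTbl 5 5 = 6)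
lemma co_5_5_7 : (if octIdxTbl 5 5 = 7 then octSgnTbl 5 5 else 0) = (0:ℝ) := if_neg (by decide : ¬ octIdxTbl 5 5 = 7)
lemma co_5_6_0 : (if octIdxTbl 5 6 = 0 then octSgnTbl 5 6 else 0) = (0:ℝ) := if_neg (by decide : ¬ octIdxTbl 5 6 = 0)
lemma co_5_6_1 : (if octIdxTbl 5 6 = 1 then octSgnTbl 5 6 else 0) = (1:ℝ) := (if_pos (by decide : octIdxTbl 5 6 = 1)).trans rfl
lemma co_5_6_2 : (if octIdxTbl 5 6 = 2 then octSgnTbl 5 6 else 0) = (0:ℝ) := if_neg (by decide : ¬ octIdxTbl 5 6 = 2)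
lemma co_5_6_3 : (if octIdxTbl 5 6 = 3 then octSgnTbl 5 6 else 0) = (0:ℝ) := if_neg (by decide : ¬ octIdxTbl 5 6 = 3)
lemma co_5_6_4 : (if octIdxTbl 5 6 = 4 then octSgnTbl 5 6 else 0) = (0:ℝ) := if_neg (by decide : ¬ octIdxTbl 5 6 = 4)
lemma co_5_6_5 : (if octIdxTbl 5 6 = 5 then octSgnTbl 5 6 else 0) = (0:ℝ) := if_neg (by decide : ¬ octIdxTbl 5 6 = 5)
lemma co_5_6_6 : (if octIdxTbl 5 6 = 6 then octSgnTbl 5 6 else 0) = (0:ℝ) := if_neg (by decide : ¬ octIdxTbl 5 6 = 6)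
lemma co_5_6_7 : (if octIdxTbl 5 6 = 7 then octSgnTbl 5 6 else 0) = (0:ℝ) := if_neg (by decide : ¬ octIdxTbl 5 6 = 7)
lemma co_5_7_0 : (if octIdxTbl 5 7 = 0 then octSgnTbl 5 7 else 0) = (0:ℝ) := if_neg (by decide : ¬ octIdxTbl 5 7 = 0)
lemma co_5_7_1 : (if octIdxTbl 5 7 = 1 then octSgnTbl 5 7 else 0) = (0:ℝ) := if_neg (by decide : ¬ octIdxTbl 5 7 = 1)
lemma co_5_7_2 : (if octIdxTbl 5 7 = 2 then octSgnTbl 5 7 else 0) = (0:ℝ) := if_neg (by decide : ¬ octIdxTbl 5 7 = 2)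
lemma co_5_7_3 : (if octIdxTbl 5 7 = 3 then octSgnTbl 5 7 else 0) = (0:ℝ) := if_neg (by decide : ¬ octIdxTbl 5 7 = 3)
lemma co_5_7_4 : (if octIdxTbl 5 7 = 4 then octSgnTbl 5 7 else 0) = (1:ℝ) := (if_pos (by decide : octIdxTbl 5 7 = 4)).trans rfl
lemma co_5_7_5 : (if octIdxTbl 5 7 = 5 then octSgnTbl 5 7 else 0) = (0:ℝ) := if_neg (by decide : ¬ octIdxTbl 5 7 = 5)
lemma co_5_7_6 : (if octIdxTbl 5 7 = 6 then octSgnTbl 5 7 else 0) = (0:ℝ) := if_neg (by decide : ¬ octIdxTbl 5 7 = 6)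
lemma co_5_7_7 : (if octIdxTbl 5 7 = 7 then octSgnTbl 5 7 else 0) = (0:ℝ) := if_neg (by decide : ¬ octIdxTbl 5 7 = 7)
lemma co_6_0_0 : (if octIdxTbl 6 0 = 0 then octSgnTbl 6 0 else 0) = (0:ℝ) := if_neg (by decide : ¬ octIdxTbl 6 0 = 0)
lemma co_6_0_1 : (if octIdxTbl 6 0 = 1 then octSgnTbl 6 0 else 0) = (0:ℝ) := if_neg (by decide : ¬ octIdxTbl 6 0 = 1)
lemma co_6_0_2 : (if octIdxTbl 6 0 = 2 then octSgnTbl 6 0 else 0) = (0:ℝ) := if_neg (by decide : ¬ octIdxTbl 6 0 = 2)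
lemma co_6_0_3 : (if octIdxTbl 6 0 = 3 then octSgnTbl 6 0 else 0) = (0:ℝ) := if_neg (by decide : ¬ octIdxTbl 6 0 = 3)
lemma co_6_0_4 : (if octIdxTbl 6 0 = 4 then octSgnTbl 6 0 else 0) = (0:ℝ) := if_neg (by decide : ¬ octIdxTbl 6 0 = 4)
lemma co_6_0_5 : (if octIdxTbl 6 0 = 5 then octSgnTbl 6 0 else 0) = (0:ℝ) := if_neg (by decide : ¬ octIdxTbl 6 0 = 5)
lemma co_6_0_6 : (if octIdxTbl 6 0 = 6 then octSgnTbl 6 0 else 0) = (1:ℝ) := (if_pos (by decide : octIdxTbl 6 0 = 6)).trans rfl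
lemma co_6_0_7 : (if octIdxTbl 6 0 = 7 then octSgnTbl 6 0 else 0) = (0:ℝ) := if_neg (by decide : ¬ octIdxTbl 6 0 = 7)
lemma co_6_1_0 : (if octIdxTbl 6 1 = 0 then octSgnTbl 6 1 else 0) = (0:ℝ) := if_neg (by decide : ¬ octIdxTbl 6 1 = 0)
lemma co_6_1_1 : (if octIdxTbl 6 1 = 1 then octSgnTbl 6 1 else 0) = (0:ℝ) := if_neg (by decide : ¬ octIdxTbl 6 1 = 1)
lemma co_6_1_2 : (if octIdxTbl 6 1 = 2 then octSgnTbl 6 1 else 0) = (0:ℝ) := if_neg (by decide : ¬ octIdxTbl 6 1 = 2)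
lemma co_6_1_3 : (if octIdxTbl 6 1 = 3 then octSgnTbl 6 1 else 0) = (0:ℝ) := if_neg (by decide : ¬ octIdxTbl 6 1 = 3)
lemma co_6_1_4 : (if octIdxTbl 6 1 = 4 then octSgnTbl 6 1 else 0) = (0:ℝ) := if_neg (by decide : ¬ octIdxTbl 6 1 = 4)
lemma co_6_1_5 : (if octIdxTbl 6 1 = 5 then octSgnTbl 6 1 else 0) = (1:ℝ) := (if_pos (by decide : octIdxTbl 6 1 = 5)).trans rfl
lemma co_6_1_6 : (if octIdxTbl 6 1 = 6 then octSgnTbl 6 1 else 0) = (0:ℝ) := if_neg (by decide : ¬ octIdxTbl 6 1 = 6)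
lemma co_6_1_7 : (if octIdxTbl 6 1 = 7 then octSgnTbl 6 1 else 0) = (0:ℝ) := if_neg (by decide : ¬ octIdxTbl 6 1 = 7)
lemma co_6_2_0 : (if octIdxTbl 6 2 = 0 then octSgnTbl 6 2 else 0) = (0:ℝ) := if_neg (by decide : ¬ octIdxTbl 6 2 = 0)
lemma co_6_2_1 : (if octIdxTbl 6 2 = 1 then octSgnTbl 6 2 else 0) = (0:ℝ) := if_neg (by decide : ¬ octIdxTbl 6 2 = 1)
lemma co_6_2_2 : (if octIdxTbl 6 2 = 2 then octSgnTbl 6 2 else 0) = (0:ℝ) := if_neg (by decide : ¬ octIdxTbl 6 2 = 2)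
lemma co_6_2_3 : (if octIdxTbl 6 2 = 3 then octSgnTbl 6 2 else 0) = (0:ℝ) := if_neg (by decide : ¬ octIdxTbl 6 2 = 3)
lemma co_6_2_4 : (if octIdxTbl 6 2 = 4 then octSgnTbl 6 2 else 0) = (0:ℝ) := if_neg (by decide : ¬ octIdxTbl 6 2 = 4)
lemma co_6_2_5 : (if octIdxTbl 6 2 = 5 then octSgnTbl 6 2 else 0) = (0:ℝ) := if_neg (by decide : ¬ octIdxTbl 6 2 = 5)
lemma co_6_2_6 : (if octIdxTbl 6 2 = 6 then octSgnTbl 6 2 else 0) = (0:ℝ) := if_neg (by decide : ¬ octIdxTbl 6 2 = 6)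
lemma co_6_2_7 : (if octIdxTbl 6 2 = 7 then octSgnTbl 6 2 else 0) = (-1:ℝ) := (if_pos (by decide : octIdxTbl 6 2 = 7)).trans rfl
lemma co_6_3_0 : (if octIdxTbl 6 3 = 0 then octSgnTbl 6 3 else 0) = (0:ℝ) := if_neg (by decide : ¬ octIdxTbl 6 3 = 0)
lemma co_6_3_1 : (if octIdxTbl 6 3 = 1 then octSgnTbl 6 3 else 0) = (0:ℝ) := if_neg (by decide : ¬ octIdxTbl 6 3 = 1)
lemma co_6_3_2 : (if octIdxTbl 6 3 = 2 then octSgnTbl 6 3 else 0) = (0:ℝ) := if_neg (by decide : ¬ octIdxTbl 6 3 = 2)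
lemma co_6_3_3 : (if octIdxTbl 6 3 = 3 then octSgnTbl 6 3 else 0) = (0:ℝ) := if_neg (by decide : ¬ octIdxTbl 6 3 = 3)
lemma co_6_3_4 : (if octIdxTbl 6 3 = 4 then octSgnTbl 6 3 else 0) = (1:ℝ) := (if_pos (by decide : octIdxTbl 6 3 = 4)).trans rfl
lemma co_6_3_5 : (if octIdxTbl 6 3 = 5 then octSgnTbl 6 3 else 0) = (0:ℝ) := if_neg (by decide : ¬ octIdxTbl 6 3 = 5)
lemma co_6_3_6 : (if octIdxTbl 6 3 = 6 then octSgnTbl 6 3 else 0) = (0:ℝ) := if_neg (by decide : ¬ octIdxTbl 6 3 = 6)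
lemma co_6_3_7 : (if octIdxTbl 6 3 = 7 then octSgnTbl 6 3 else 0) = (0:ℝ) := if_neg (by decide : ¬ octIdxTbl 6 3 = 7)
lemma co_6_4_0 : (if octIdxTbl 6 4 = 0 then octSgnTbl 6 4 else 0) = (0:ℝ) := if_neg (by decide : ¬ octIdxTbl 6 4 = 0)
lemma co_6_4_1 : (if octIdxTbl 6 4 = 1 then octSgnTbl 6 4 else 0) = (0:ℝ) := if_neg (by decide : ¬ octIdxTbl 6 4 = 1)
lemma co_6_4_2 : (if octIdxTbl 6 4 = 2 then octSgnTbl 6 4 else 0) = (0:ℝ) := if_neg (by decide : ¬ octIdxTbl 6 4 = 2)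
lemma co_6_4_3 : (if octIdxTbl 6 4 = 3 then octSgnTbl 6 4 else 0) = (-1:ℝ) := (if_pos (by decide : octIdxTbl 6 4 = 3)).trans rfl
lemma co_6_4_4 : (if octIdxTbl 6 4 = 4 then octSgnTbl 6 4 else 0) = (0:ℝ) := if_neg (by decide : ¬ octIdxTbl 6 4 = 4)
lemma co_6_4_5 : (if octIdxTbl 6 4 = 5 then octSgnTbl 6 4 else 0) = (0:ℝ) := if_neg (by decide : ¬ octIdxTbl 6 4 = 5)
lemma co_6_4_6 : (if octIdxTbl 6 4 = 6 then octSgnTbl 6 4 else 0) = (0:ℝ) := if_neg (by decide : ¬ octIdxTbl 6 4 = 6)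
lemma co_6_4_7 : (if octIdxTbl 6 4 = 7 then octSgnTbl 6 4 else 0) = (0:ℝ) := if_neg (by decide : ¬ octIdxTbl 6 4 = 7)
lemma co_6_5_0 : (if octIdxTbl 6 5 = 0 then octSgnTbl 6 5 else 0) = (0:ℝ) := if_neg (by decide : ¬ octIdxTbl 6 5 = 0)
lemma co_6_5_1 : (if octIdxTbl 6 5 = 1 then octSgnTbl 6 5 else 0) = (-1:ℝ) := (if_pos (by decide : octIdxTbl 6 5 = 1)).trans rfl
lemma co_6_5_2 : (if octIdxTbl 6 5 = 2 then octSgnTbl 6 5 else 0) = (0:ℝ) := if_neg (by decide : ¬ octIdxTbl 6 5 = 2)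
lemma co_6_5_3 : (if octIdxTbl 6 5 = 3 then octSgnTbl 6 5 else 0) = (0:ℝ) := if_neg (by decide : ¬ octIdxTbl 6 5 = 3)
lemma co_6_5_4 : (if octIdxTbl 6 5 = 4 then octSgnTbl 6 5 else 0) = (0:ℝ) := if_neg (by decide : ¬ octIdxTbl 6 5 = 4)
lemma co_6_5_5 : (if octIdxTbl 6 5 = 5 then octSgnTbl 6 5 else 0) = (0:ℝ) := if_neg (by decide : ¬ octIdxTbl 6 5 = 5)
lemma co_6_5_6 : (if octIdxTbl 6 5 = 6 then octSgnTbl 6 5 else 0) = (0:ℝ) := if_neg (by decide : ¬ octIdxTbl 6 5 = 6)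
lemma co_6_5_7 : (if octIdxTbl 6 5 = 7 then octSgnTbl 6 5 else 0) = (0:ℝ) := if_neg (by decide : ¬ octIdxTbl 6 5 = 7)
lemma co_6_6_0 : (if octIdxTbl 6 6 = 0 then octSgnTbl 6 6 else 0) = (-1:ℝ) := (if_pos (by decide : octIdxTbl 6 6 = 0)).trans rfl
lemma co_6_6_1 : (if octIdxTbl 6 6 = 1 then octSgnTbl 6 6 else 0) = (0:ℝ) := if_neg (by decide : ¬ octIdxTbl 6 6 = 1)
lemma co_6_6_2 : (if octIdxTbl 6 6 = 2 then octSgnTbl 6 6 else 0) = (0:ℝ) := if_neg (by decide : ¬ octIdxTbl 6 6 = 2)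
lemma co_6_6_3 : (if octIdxTbl 6 6 = 3 then octSgnTbl 6 6 else 0) = (0:ℝ) := if_neg (by decide : ¬ octIdxTbl 6 6 = 3)
lemma co_6_6_4 : (if octIdxTbl 6 6 = 4 then octSgnTbl 6 6 else 0) = (0:ℝ) := if_neg (by decide : ¬ octIdxTbl 6 6 = 4)
lemma co_6_6_5 : (if octIdxTbl 6 6 = 5 then octSgnTbl 6 6 else 0) = (0:ℝ) := if_neg (by decide : ¬ octIdxTbl 6 6 = 5)
lemma co_6_6_6 : (if octIdxTbl 6 6 = 6 then octSgnTbl 6 6 else 0) = (0:ℝ) := if_neg (by decide : ¬ octIdxTbl 6 6 = 6)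
lemma co_6_6_7 : (if octIdxTbl 6 6 = 7 then octSgnTbl 6 6 else 0) = (0:ℝ) := if_neg (by decide : ¬ octIdxTbl 6 6 = 7)
lemma co_6_7_0 : (if octIdxTbl 6 7 = 0 then octSgnTbl 6 7 else 0) = (0:ℝ) := if_neg (by decide : ¬ octIdxTbl 6 7 = 0)
lemma co_6_7_1 : (if octIdxTbl 6 7 = 1 then octSgnTbl 6 7 else 0) = (0:ℝ) := if_neg (by decide : ¬ octIdxTbl 6 7 = 1)
lemma co_6_7_2 : (if octIdxTbl 6 7 = 2 then octSgnTbl 6 7 else 0) = (1:ℝ) := (if_pos (by decide : octIdxTbl 6 7 = 2)).trans rfl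
lemma co_6_7_3 : (if octIdxTbl 6 7 = 3 then octSgnTbl 6 7 else 0) = (0:ℝ) := if_neg (by decide : ¬ octIdxTbl 6 7 = 3)
lemma co_6_7_4 : (if octIdxTbl 6 7 = 4 then octSgnTbl 6 7 else 0) = (0:ℝ) := if_neg (by decide : ¬ octIdxTbl 6 7 = 4)
lemma co_6_7_5 : (if octIdxTbl 6 7 = 5 then octSgnTbl 6 7 else 0) = (0:ℝ) := if_neg (by decide : ¬ octIdxTbl 6 7 = 5)
lemma co_6_7_6 : (if octIdxTbl 6 7 = 6 then octSgnTbl 6 7 else 0) = (0:ℝ) := if_neg (by decide : ¬ octIdxTbl 6 7 = 6)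
lemma co_6_7_7 : (if octIdxTbl 6 7 = 7 then octSgnTbl 6 7 else 0) = (0:ℝ) := if_neg (by decide : ¬ octIdxTbl 6 7 = 7)
lemma co_7_0_0 : (if octIdxTbl 7 0 = 0 then octSgnTbl 7 0 else 0) = (0:ℝ) := if_neg (by decide : ¬ octIdxTbl 7 0 = 0)
lemma co_7_0_1 : (if octIdxTbl 7 0 = 1 then octSgnTbl 7 0 else 0) = (0:ℝ) := if_neg (by decide : ¬ octIdxTbl 7 0 = 1)
lemma co_7_0_2 : (if octIdxTbl 7 0 = 2 then octSgnTbl 7 0 else 0) = (0:ℝ) := if_neg (by decide : ¬ octIdxTbl 7 0 = 2)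
lemma co_7_0_3 : (if octIdxTbl 7 0 = 3 then octSgnTbl 7 0 else 0) = (0:ℝ) := if_neg (by decide : ¬ octIdxTbl 7 0 = 3)
lemma co_7_0_4 : (if octIdxTbl 7 0 = 4 then octSgnTbl 7 0 else 0) = (0:ℝ) := if_neg (by decide : ¬ octIdxTbl 7 0 = 4)
lemma co_7_0_5 : (if octIdxTbl 7 0 = 5 then octSgnTbl 7 0 else 0) = (0:ℝ) := if_neg (by decide : ¬ octIdxTbl 7 0 = 5)
lemma co_7_0_6 : (if octIdxTbl 7 0 = 6 then octSgnTbl 7 0 else 0) = (0:ℝ) := if_neg (by decide : ¬ octIdxTbl 7 0 = 6)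
lemma co_7_0_7 : (if octIdxTbl 7 0 = 7 then octSgnTbl 7 0 else 0) = (1:ℝ) := (if_pos (by decide : octIdxTbl 7 0 = 7)).trans rfl
lemma co_7_1_0 : (if octIdxTbl 7 1 = 0 then octSgnTbl 7 1 else 0) = (0:ℝ) := if_neg (by decide : ¬ octIdxTbl 7 1 = 0)
lemma co_7_1_1 : (if octIdxTbl 7 1 = 1 then octSgnTbl 7 1 else 0) = (0:ℝ) := if_neg (by decide : ¬ octIdxTbl 7 1 = 1)
lemma co_7_1_2 : (if octIdxTbl 7 1 = 2 then octSgnTbl 7 1 else 0) = (0:ℝ) := if_neg (by decide : ¬ octIdxTbl 7 1 = 2)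
lemma co_7_1_3 : (if octIdxTbl 7 1 = 3 then octSgnTbl 7 1 else 0) = (1:ℝ) := (if_pos (by decide : octIdxTbl 7 1 = 3)).trans rfl
lemma co_7_1_4 : (if octIdxTbl 7 1 = 4 then octSgnTbl 7 1 else 0) = (0:ℝ) := if_neg (by decide : ¬ octIdxTbl 7 1 = 4)
lemma co_7_1_5 : (if octIdxTbl 7 1 = 5 then octSgnTbl 7 1 else 0) = (0:ℝ) := if_neg (by decide : ¬ octIdxTbl 7 1 = 5)
lemma co_7_1_6 : (if octIdxTbl 7 1 = 6 then octSgnTbl 7 1 else 0) = (0:ℝ) := if_neg (by decide : ¬ octIdxTbl 7 1 = 6)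
lemma co_7_1_7 : (if octIdxTbl 7 1 = 7 then octSgnTbl 7 1 else 0) = (0:ℝ) := if_neg (by decide : ¬ octIdxTbl 7 1 = 7)
lemma co_7_2_0 : (if octIdxTbl 7 2 = 0 then octSgnTbl 7 2 else 0) = (0:ℝ) := if_neg (by decide : ¬ octIdxTbl 7 2 = 0)
lemma co_7_2_1 : (if octIdxTbl 7 2 = 1 then octSgnTbl 7 2 else 0) = (0:ℝ) := if_neg (by decide : ¬ octIdxTbl 7 2 = 1)
lemma co_7_2_2 : (if octIdxTbl 7 2 = 2 then octSgnTbl 7 2 else 0) = (0:ℝ) := if_neg (by decide : ¬ octIdxTbl 7 2 = 2)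
lemma co_7_2_3 : (if octIdxTbl 7 2 = 3 then octSgnTbl 7 2 else 0) = (0:ℝ) := if_neg (by decide : ¬ octIdxTbl 7 2 = 3)
lemma co_7_2_4 : (if octIdxTbl 7 2 = 4 then octSgnTbl 7 2 else 0) = (0:ℝ) := if_neg (by decide : ¬ octIdxTbl 7 2 = 4)
lemma co_7_2_5 : (if octIdxTbl 7 2 = 5 then octSgnTbl 7 2 else 0) = (0:ℝ) := if_neg (by decide : ¬ octIdxTbl 7 2 = 5)
lemma co_7_2_6 : (if octIdxTbl 7 2 = 6 then octSgnTbl 7 2 else 0) = (1:ℝ) := (if_pos (by decide : octIdxTbl 7 2 = 6)).trans rfl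
lemma co_7_2_7 : (if octIdxTbl 7 2 = 7 then octSgnTbl 7 2 else 0) = (0:ℝ) := if_neg (by decide : ¬ octIdxTbl 7 2 = 7)
lemma co_7_3_0 : (if octIdxTbl 7 3 = 0 then octSgnTbl 7 3 else 0) = (0:ℝ) := if_neg (by decide : ¬ octIdxTbl 7 3 = 0)
lemma co_7_3_1 : (if octIdxTbl 7 3 = 1 then octSgnTbl 7 3 else 0) = (-1:ℝ) := (if_pos (by decide : octIdxTbl 7 3 = 1)).trans rfl
lemma co_7_3_2 : (if octIdxTbl 7 3 = 2 then octSgnTbl 7 3 else 0) = (0:ℝ) := if_neg (by decide : ¬ octIdxTbl 7 3 = 2)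
lemma co_7_3_3 : (if octIdxTbl 7 3 = 3 then octSgnTbl 7 3 else 0) = (0:ℝ) := if_neg (by decide : ¬ octIdxTbl 7 3 = 3)
lemma co_7_3_4 : (if octIdxTbl 7 3 = 4 then octSgnTbl 7 3 else 0) = (0:ℝ) := if_neg (by decide : ¬ octIdxTbl 7 3 = 4)
lemma co_7_3_5 : (if octIdxTbl 7 3 = 5 then octSgnTbl 7 3 else 0) = (0:ℝ) := if_neg (by decide : ¬ octIdxTbl 7 3 = 5)
lemma co_7_3_6 : (if octIdxTbl 7 3 = 6 then octSgnTbl 7 3 else 0) = (0:ℝ) := if_neg (by decide : ¬ octIdxTbl 7 3 = 6)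
lemma co_7_3_7 : (if octIdxTbl 7 3 = 7 then octSgnTbl 7 3 else 0) = (0:ℝ) := if_neg (by decide : ¬ octIdxTbl 7 3 = 7)
lemma co_7_4_0 : (if octIdxTbl 7 4 = 0 then octSgnTbl 7 4 else 0) = (0:ℝ) := if_neg (by decide : ¬ octIdxTbl 7 4 = 0)
lemma co_7_4_1 : (if octIdxTbl 7 4 = 1 then octSgnTbl 7 4 else 0) = (0:ℝ) := if_neg (by decide : ¬ octIdxTbl 7 4 = 1)
lemma co_7_4_2 : (if octIdxTbl 7 4 = 2 then octSgnTbl 7 4 else 0) = (0:ℝ) := if_neg (by decide : ¬ octIdxTbl 7 4 = 2)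
lemma co_7_4_3 : (if octIdxTbl 7 4 = 3 then octSgnTbl 7 4 else 0) = (0:ℝ) := if_neg (by decide : ¬ octIdxTbl 7 4 = 3)
lemma co_7_4_4 : (if octIdxTbl 7 4 = 4 then octSgnTbl 7 4 else 0) = (0:ℝ) := if_neg (by decide : ¬ octIdxTbl 7 4 = 4)
lemma co_7_4_5 : (if octIdxTbl 7 4 = 5 then octSgnTbl 7 4 else 0) = (1:ℝ) := (if_pos (by decide : octIdxTbl 7 4 = 5)).trans rfl
lemma co_7_4_6 : (if octIdxTbl 7 4 = 6 then octSgnTbl 7 4 else 0) = (0:ℝ) := if_neg (by decide : ¬ octIdxTbl 7 4 = 6)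
lemma co_7_4_7 : (if octIdxTbl 7 4 = 7 then octSgnTbl 7 4 else 0) = (0:ℝ) := if_neg (by decide : ¬ octIdxTbl 7 4 = 7)
lemma co_7_5_0 : (if octIdxTbl 7 5 = 0 then octSgnTbl 7 5 else 0) = (0:ℝ) := if_neg (by decide : ¬ octIdxTbl 7 5 = 0)
lemma co_7_5_1 : (if octIdxTbl 7 5 = 1 then octSgnTbl 7 5 else 0) = (0:ℝ) := if_neg (by decide : ¬ octIdxTbl 7 5 = 1)
lemma co_7_5_2 : (if octIdxTbl 7 5 = 2 then octSgnTbl 7 5 else 0) = (0:ℝ) := if_neg (by decide : ¬ octIdxTbl 7 5 = 2)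
lemma co_7_5_3 : (if octIdxTbl 7 5 = 3 then octSgnTbl 7 5 else 0) = (0:ℝ) := if_neg (by decide : ¬ octIdxTbl 7 5 = 3)
lemma co_7_5_4 : (if octIdxTbl 7 5 = 4 then octSgnTbl 7 5 else 0) = (-1:ℝ) := (if_pos (by decide : octIdxTbl 7 5 = 4)).trans rfl
lemma co_7_5_5 : (if octIdxTbl 7 5 = 5 then octSgnTbl 7 5 else 0) = (0:ℝ) := if_neg (by decide : ¬ octIdxTbl 7 5 = 5)
lemma co_7_5_6 : (if octIdxTbl 7 5 = 6 then octSgnTbl 7 5 else 0) = (0:ℝ) := if_neg (by decide : ¬ octIdxTbl 7 5 = 6)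
lemma co_7_5_7 : (if octIdxTbl 7 5 = 7 then octSgnTbl 7 5 else 0) = (0:ℝ) := if_neg (by decide : ¬ octIdxTbl 7 5 = 7)
lemma co_7_6_0 : (if octIdxTbl 7 6 = 0 then octSgnTbl 7 6 else 0) = (0:ℝ) := if_neg (by decide : ¬ octIdxTbl 7 6 = 0)
lemma co_7_6_1 : (if octIdxTbl 7 6 = 1 then octSgnTbl 7 6 else 0) = (0:ℝ) := if_neg (by decide : ¬ octIdxTbl 7 6 = 1)
lemma co_7_6_2 : (if octIdxTbl 7 6 = 2 then octSgnTbl 7 6 else 0) = (-1:ℝ) := (if_pos (by decide : octIdxTbl 7 6 = 2)).trans rfl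
lemma co_7_6_3 : (if octIdxTbl 7 6 = 3 then octSgnTbl 7 6 else 0) = (0:ℝ) := if_neg (by decide : ¬ octIdxTbl 7 6 = 3)
lemma co_7_6_4 : (if octIdxTbl 7 6 = 4 then octSgnTbl 7 6 else 0) = (0:ℝ) := if_neg (by decide : ¬ octIdxTbl 7 6 = 4)
lemma co_7_6_5 : (if octIdxTbl 7 6 = 5 then octSgnTbl 7 6 else 0) = (0:ℝ) := if_neg (by decide : ¬ octIdxTbl 7 6 = 5)
lemma co_7_6_6 : (if octIdxTbl 7 6 = 6 then octSgnTbl 7 6 else 0) = (0:ℝ) := if_neg (by decide : ¬ octIdxTbl 7 6 = 6)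
lemma co_7_6_7 : (if octIdxTbl 7 6 = 7 then octSgnTbl 7 6 else 0) = (0:ℝ) := if_neg (by decide : ¬ octIdxTbl 7 6 = 7)
lemma co_7_7_0 : (if octIdxTbl 7 7 = 0 then octSgnTbl 7 7 else 0) = (-1:ℝ) := (if_pos (by decide : octIdxTbl 7 7 = 0)).trans rfl
lemma co_7_7_1 : (if octIdxTbl 7 7 = 1 then octSgnTbl 7 7 else 0) = (0:ℝ) := if_neg (by decide : ¬ octIdxTbl 7 7 = 1)
lemma co_7_7_2 : (if octIdxTbl 7 7 = 2 then octSgnTbl 7 7 else 0) = (0:ℝ) := if_neg (by decide : ¬ octIdxTbl 7 7 = 2)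
lemma co_7_7_3 : (if octIdxTbl 7 7 = 3 then octSgnTbl 7 7 else 0) = (0:ℝ) := if_neg (by decide : ¬ octIdxTbl 7 7 = 3)
lemma co_7_7_4 : (if octIdxTbl 7 7 = 4 then octSgnTbl 7 7 else 0) = (0:ℝ) := if_neg (by decide : ¬ octIdxTbl 7 7 = 4)
lemma co_7_7_5 : (if octIdxTbl 7 7 = 5 then octSgnTbl 7 7 else 0) = (0:ℝ) := if_neg (by decide : ¬ octIdxTbl 7 7 = 5)
lemma co_7_7_6 : (if octIdxTbl 7 7 = 6 then octSgnTbl 7 7 else 0) = (0:ℝ) := if_neg (by decide : ¬ octIdxTbl 7 7 = 6)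
lemma co_7_7_7 : (if octIdxTbl 7 7 = 7 then octSgnTbl 7 7 else 0) = (0:ℝ) := if_neg (by decide : ¬ octIdxTbl 7 7 = 7)
lemma mul_c0 (x y : Oct) : (x*y).c 0 = x.c 0 * y.c 0 - x.c 1 * y.c 1 - x.c 2 * y.c 2 - x.c 3 * y.c 3 - x.c 4 * y.c 4 - x.c 5 * y.c 5 - x.c 6 * y.c 6 - x.c 7 * y.c 7 := by
  simp only [mul_c, Fin.sum_univ_eight, co_0_0_0, co_0_1_0, co_0_2_0, co_0_3_0, co_0_4_0, co_0_5_0, co_0_6_0, co_0_7_0, co_1_0_0, co_1_1_0, co_1_2_0, co_1_3_0, co_1_4_0, co_1_5_0, co_1_6_0, co_1_7_0, co_2_0_0, co_2_1_0, co_2_2_0, co_2_3_0, co_2_4_0, co_2_5_0, co_2_6_0, co_2_7_0, co_3_0_0, co_3_1_0, co_3_2_0, co_3_3_0, co_3_4_0, co_3_5_0, co_3_6_0, co_3_7_0, co_4_0_0, co_4_1_0, co_4_2_0, co_4_3_0, co_4_4_0, co_4_5_0, co_4_6_0, co_4_7_0, co_5_0_0, co_5_1_0, co_5_2_0, co_5_3_0,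 co_5_4_0, co_5_5_0, co_5_6_0, co_5_7_0, co_6_0_0, co_6_1_0, co_6_2_0, co_6_3_0, co_6_4_0, co_6_5_0, co_6_6_0, co_6_7_0, co_7_0_0, co_7_1_0, co_7_2_0, co_7_3_0, co_7_4_0, co_7_5_0, co_7_6_0, co_7_7_0]
  ring
lemma mul_c1 (x y : Oct) : (x*y).c 1 = x.c 0 * y.c 1 + x.c 1 * y.c 0 + x.c 2 * y.c 4 + x.c 3 * y.c 7 - x.c 4 * y.c 2 + x.c 5 * y.c 6 - x.c 6 * y.c 5 - x.c 7 * y.c 3 := by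
  simp only [mul_c, Fin.sum_univ_eight, co_0_0_1, co_0_1_1, co_0_2_1, co_0_3_1, co_0_4_1, co_0_5_1, co_0_6_1, co_0_7_1, co_1_0_1, co_1_1_1, co_1_2_1, co_1_3_1, co_1_4_1, co_1_5_1, co_1_6_1, co_1_7_1, co_2_0_1, co_2_1_1, co_2_2_1, co_2_3_1, co_2_4_1, co_2_5_1, co_2_6_1, co_2_7_1, co_3_0_1, co_3_1_1, co_3_2_1, co_3_3_1, co_3_4_1, co_3_5_1, co_3_6_1, co_3_7_1, co_4_0_1, co_4_1_1, co_4_2_1, co_4_3_1, co_4_4_1, co_4_5_1, co_4_6_1, co_4_7_1, co_5_0_1, co_5_1_1, co_5_2_1, co_5_3_1, co_5_4_1, co_5_5_1, co_5_6_1, co_5_7_1, co_6_0_1, co_6_1_1, co_6_2_1, co_6_3_1, co_6_4_1, co_6_5_1, co_6_6_1, co_6_7_1, co_7_0_1, co_7_1_1, co_7_2_1, co_7_3_1, co_7_4_1, co_7_5_1, co_7_6_1, co_7_7_1]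
  ring
lemma mul_c2 (x y : Oct) : (x*y).c 2 = x.c 0 * y.c 2 - x.c 1 * y.c 4 + x.c 2 * y.c 0 + x.c 3 * y.c 5 + x.c 4 * y.c 1 - x.c 5 * y.c 3 + x.c 6 * y.c 7 - x.c 7 * y.c 6 := by
  simp only [mul_c, Fin.sum_univ_eight, co_0_0_2, co_0_1_2, co_0_2_2, co_0_3_2, co_0_4_2, co_0_5_2, co_0_6_2, co_0_7_2, co_1_0_2, co_1_1_2, co_1_2_2, co_1_3_2, co_1_4_2, co_1_5_2, co_1_6_2, co_1_7_2, co_2_0_2, co_2_1_2, co_2_2_2, co_2_3_2, co_2_4_2, co_2_5_2, co_2_6_2, co_2_7_2, co_3_0_2, co_3_1_2, co_3_2_2, co_3_3_2, co_3_4_2, co_3_5_2, co_3_6_2, co_3_7_2, co_4_0_2, co_4_1_2, co_4_2_2, co_4_3_2, co_4_4_2, co_4_5_2, co_4_6_2, co_4_7_2, co_5_0_2, co_5_1_2, co_5_2_2, co_5_3_2, co_5_4_2, co_5_5_2, co_5_6_2, co_5_7_2, co_6_0_2, co_6_1_2, co_6_2_2, co_6_3_2, co_6_4_2, co_6_5_2,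 co_6_6_2, co_6_7_2, co_7_0_2, co_7_1_2, co_7_2_2, co_7_3_2, co_7_4_2, co_7_5_2, co_7_6_2, co_7_7_2]
  ring
lemma mul_c3 (x y : Oct) : (x*y).c 3 = x.c 0 * y.c 3 - x.c 1 * y.c 7 - x.c 2 * y.c 5 + x.c 3 * y.c 0 + x.c 4 * y.c 6 + x.c 5 * y.c 2 - x.c 6 * y.c 4 + x.c 7 * y.c 1 := by
  simp only [mul_c, Fin.sum_univ_eight, co_0_0_3, co_0_1_3, co_0_2_3, co_0_3_3, co_0_4_3, co_0_5_3, co_0_6_3, co_0_7_3, co_1_0_3, co_1_1_3, co_1_2_3, co_1_3_3, co_1_4_3, co_1_5_3, co_1_6_3, co_1_7_3, co_2_0_3, co_2_1_3, co_2_2_3, co_2_3_3, co_2_4_3, co_2_5_3, co_2_6_3, co_2_7_3, co_3_0_3, co_3_1_3, co_3_2_3, co_3_3_3, co_3_4_3, co_3_5_3, co_3_6_3, co_3_7_3, co_4_0_3, co_4_1_3, co_4_2_3, co_4_3_3, co_4_4_3, co_4_5_3, co_4_6_3, co_4_7_3, co_5_0_3, co_5_1_3, co_5_2_3, co_5_3_3,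 co_5_4_3, co_5_5_3, co_5_6_3, co_5_7_3, co_6_0_3, co_6_1_3, co_6_2_3, co_6_3_3, co_6_4_3, co_6_5_3, co_6_6_3, co_6_7_3, co_7_0_3, co_7_1_3, co_7_2_3, co_7_3_3, co_7_4_3, co_7_5_3, co_7_6_3, co_7_7_3]
  ring
lemma mul_c4 (x y : Oct) : (x*y).c 4 = x.c 0 * y.c 4 + x.c 1 * y.c 2 - x.c 2 * y.c 1 - x.c 3 * y.c 6 + x.c 4 * y.c 0 + x.c 5 * y.c 7 + x.c 6 * y.c 3 - x.c 7 * y.c 5 := by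
  simp only [mul_c, Fin.sum_univ_eight, co_0_0_4, co_0_1_4, co_0_2_4, co_0_3_4, co_0_4_4, co_0_5_4, co_0_6_4, co_0_7_4, co_1_0_4, co_1_1_4, co_1_2_4, co_1_3_4, co_1_4_4, co_1_5_4, co_1_6_4, co_1_7_4, co_2_0_4, co_2_1_4, co_2_2_4, co_2_3_4, co_2_4_4, co_2_5_4, co_2_6_4, co_2_7_4, co_3_0_4, co_3_1_4, co_3_2_4, co_3_3_4, co_3_4_4, co_3_5_4, co_3_6_4, co_3_7_4, co_4_0_4, co_4_1_4, co_4_2_4, co_4_3_4, co_4_4_4, co_4_5_4, co_4_6_4, co_4_7_4, co_5_0_4, co_5_1_4, co_5_2_4, co_5_3_4, co_5_4_4, co_5_5_4, co_5_6_4, co_5_7_4, co_6_0_4, co_6_1_4, co_6_2_4, co_6_3_4, co_6_4_4, co_6_5_4, co_6_6_4, co_6_7_4, co_7_0_4, co_7_1_4, co_7_2_4, co_7_3_4, co_7_4_4, co_7_5_4, co_7_6_4, co_7_7_4]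
  ring
lemma mul_c5 (x y : Oct) : (x*y).c 5 = x.c 0 * y.c 5 - x.c 1 * y.c 6 + x.c 2 * y.c 3 - x.c 3 * y.c 2 - x.c 4 * y.c 7 + x.c 5 * y.c 0 + x.c 6 * y.c 1 + x.c 7 * y.c 4 := by
  simp only [mul_c, Fin.sum_univ_eight, co_0_0_5, co_0_1_5, co_0_2_5, co_0_3_5, co_0_4_5, co_0_5_5, co_0_6_5, co_0_7_5, co_1_0_5, co_1_1_5, co_1_2_5, co_1_3_5, co_1_4_5, co_1_5_5, co_1_6_5, co_1_7_5, co_2_0_5, co_2_1_5, co_2_2_5, co_2_3_5, co_2_4_5, co_2_5_5, co_2_6_5, co_2_7_5, co_3_0_5, co_3_1_5, co_3_2_5, co_3_3_5, co_3_4_5, co_3_5_5, co_3_6_5, co_3_7_5, co_4_0_5, co_4_1_5, co_4_2_5, co_4_3_5, co_4_4_5, co_4_5_5, co_4_6_5, co_4_7_5, co_5_0_5, co_5_1_5, co_5_2_5, co_5_3_5, co_5_4_5, co_5_5_5, co_5_6_5, co_5_7_5, co_6_0_5, co_6_1_5, co_6_2_5, co_6_3_5, co_6_4_5, co_6_5_5,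 co_6_6_5, co_6_7_5, co_7_0_5, co_7_1_5, co_7_2_5, co_7_3_5, co_7_4_5, co_7_5_5, co_7_6_5, co_7_7_5]
  ring
lemma mul_c6 (x y : Oct) : (x*y).c 6 = x.c 0 * y.c 6 + x.c 1 * y.c 5 - x.c 2 * y.c 7 + x.c 3 * y.c 4 - x.c 4 * y.c 3 - x.c 5 * y.c 1 + x.c 6 * y.c 0 + x.c 7 * y.c 2 := by
  simp only [mul_c, Fin.sum_univ_eight, co_0_0_6, co_0_1_6, co_0_2_6, co_0_3_6, co_0_4_6, co_0_5_6, co_0_6_6, co_0_7_6, co_1_0_6, co_1_1_6, co_1_2_6, co_1_3_6, co_1_4_6, co_1_5_6, co_1_6_6, co_1_7_6, co_2_0_6, co_2_1_6, co_2_2_6, co_2_3_6, co_2_4_6, co_2_5_6, co_2_6_6, co_2_7_6, co_3_0_6, co_3_1_6, co_3_2_6, co_3_3_6, co_3_4_6, co_3_5_6, co_3_6_6, co_3_7_6, co_4_0_6, co_4_1_6, co_4_2_6, co_4_3_6, co_4_4_6, co_4_5_6, co_4_6_6, co_4_7_6, co_5_0_6, co_5_1_6, co_5_2_6, co_5_3_6,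 co_5_4_6, co_5_5_6, co_5_6_6, co_5_7_6, co_6_0_6, co_6_1_6, co_6_2_6, co_6_3_6, co_6_4_6, co_6_5_6, co_6_6_6, co_6_7_6, co_7_0_6, co_7_1_6, co_7_2_6, co_7_3_6, co_7_4_6, co_7_5_6, co_7_6_6, co_7_7_6]
  ring
lemma mul_c7 (x y : Oct) : (x*y).c 7 = x.c 0 * y.c 7 + x.c 1 * y.c 3 + x.c 2 * y.c 6 - x.c 3 * y.c 1 + x.c 4 * y.c 5 - x.c 5 * y.c 4 - x.c 6 * y.c 2 + x.c 7 * y.c 0 := by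
  simp only [mul_c, Fin.sum_univ_eight, co_0_0_7, co_0_1_7, co_0_2_7, co_0_3_7, co_0_4_7, co_0_5_7, co_0_6_7, co_0_7_7, co_1_0_7, co_1_1_7, co_1_2_7, co_1_3_7, co_1_4_7, co_1_5_7, co_1_6_7, co_1_7_7, co_2_0_7, co_2_1_7, co_2_2_7, co_2_3_7, co_2_4_7, co_2_5_7, co_2_6_7, co_2_7_7, co_3_0_7, co_3_1_7, co_3_2_7, co_3_3_7, co_3_4_7, co_3_5_7, co_3_6_7, co_3_7_7, co_4_0_7, co_4_1_7, co_4_2_7, co_4_3_7, co_4_4_7, co_4_5_7, co_4_6_7, co_4_7_7, co_5_0_7, co_5_1_7, co_5_2_7, co_5_3_7, co_5_4_7, co_5_5_7, co_5_6_7, co_5_7_7, co_6_0_7, co_6_1_7, co_6_2_7, co_6_3_7, co_6_4_7, co_6_5_7, co_6_6_7, co_6_7_7, co_7_0_7, co_7_1_7, co_7_2_7, co_7_3_7, co_7_4_7, co_7_5_7, co_7_6_7, co_7_7_7]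
  ring


lemma oext (x y : Oct) (h : ∀ k, x.c k = y.c k) : x = y := by
  cases x; cases y; simp only [Oct.mk.injEq]; funext k; exact h k

lemma oext8 (x y : Oct) (h0 : x.c 0 = y.c 0) (h1 : x.c 1 = y.c 1) (h2 : x.c 2 = y.c 2)
    (h3 : x.c 3 = y.c 3) (h4 : x.c 4 = y.c 4) (h5 : x.c 5 = y.c 5) (h6 : x.c 6 = y.c 6)
    (h7 : x.c 7 = y.c 7) : x = y := by
  refine oext _ _ fun k => ?_
  fin_cases k <;> assumption

lemma add_c (x y : Oct) (k : Fin 8) : (x + y).c k = x.c k + y.c k := rfl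
lemma neg_c (x : Oct) (k : Fin 8) : (-x).c k = -x.c k := rfl
lemma smul_c (r : ℝ) (x : Oct) (k : Fin 8) : (r • x).c k = r * x.c k := rfl
lemma zero_c (k : Fin 8) : (0 : Oct).c k = 0 := rfl
lemma one_c0 : (1 : Oct).c 0 = 1 := rfl
lemma one_c1 : (1 : Oct).c 1 = 0 := rfl
lemma one_c2 : (1 : Oct).c 2 = 0 := rfl
lemma one_c3 : (1 : Oct).c 3 = 0 := rfl
lemma one_c4 : (1 : Oct).c 4 = 0 := rfl
lemma one_c5 : (1 : Oct).c 5 = 0 := rfl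
lemma one_c6 : (1 : Oct).c 6 = 0 := rfl
lemma one_c7 : (1 : Oct).c 7 = 0 := rfl
lemma conj_c0 (x : Oct) : (conj x).c 0 = x.c 0 := rfl
lemma conj_c1 (x : Oct) : (conj x).c 1 = -x.c 1 := rfl
lemma conj_c2 (x : Oct) : (conj x).c 2 = -x.c 2 := rfl
lemma conj_c3 (x : Oct) : (conj x).c 3 = -x.c 3 := rfl
lemma conj_c4 (x : Oct) : (conj x).c 4 = -x.c 4 := rfl
lemma conj_c5 (x : Oct) : (conj x).c 5 = -x.c 5 := rfl
lemma conj_c6 (x : Oct) : (conj x).c 6 = -x.c 6 := rfl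
lemma conj_c7 (x : Oct) : (conj x).c 7 = -x.c 7 := rfl

section
variable (x y : Oct) (r t : ℝ)

attribute [local simp] mul_c0 mul_c1 mul_c2 mul_c3 mul_c4 mul_c5 mul_c6 mul_c7
  add_c neg_c smul_c zero_c one_c0 one_c1 one_c2 one_c3 one_c4 one_c5 one_c6 one_c7
  conj_c0 conj_c1 conj_c2 conj_c3 conj_c4 conj_c5 conj_c6 conj_c7

lemma eta_eq : eta x = x.c 0^2 + x.c 1^2 + x.c 2^2 + x.c 3^2 + x.c 4^2 + x.c 5^2 + x.c 6^2 + x.c 7^2 := by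
  simp only [eta, re, mul_c0, conj_c0, conj_c1, conj_c2, conj_c3, conj_c4, conj_c5, conj_c6, conj_c7]
  ring

lemma conj_conj : conj (conj x) = x := by
  refine oext8 _ _ ?_ ?_ ?_ ?_ ?_ ?_ ?_ ?_ <;> simp

lemma conj_zero : conj (0 : Oct) = 0 := by
  refine oext8 _ _ ?_ ?_ ?_ ?_ ?_ ?_ ?_ ?_ <;> simp

lemma conj_smul : conj (r • x) = r • conj x := by
  refine oext8 _ _ ?_ ?_ ?_ ?_ ?_ ?_ ?_ ?_ <;> simp

lemma eta_conj : eta (conj x) = eta x := by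
  simp only [eta_eq, conj_c0, conj_c1, conj_c2, conj_c3, conj_c4, conj_c5, conj_c6, conj_c7]
  ring

lemma eta_zero : eta (0 : Oct) = 0 := by simp [eta_eq]

lemma zero_mul' : (0 : Oct) * x = 0 := by
  refine oext8 _ _ ?_ ?_ ?_ ?_ ?_ ?_ ?_ ?_ <;> simp

lemma mul_zero' : x * (0 : Oct) = 0 := by
  refine oext8 _ _ ?_ ?_ ?_ ?_ ?_ ?_ ?_ ?_ <;> simp

lemma one_mul' : (1 : Oct) * x = x := by
  refine oext8 _ _ ?_ ?_ ?_ ?_ ?_ ?_ ?_ ?_ <;> simp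

lemma mul_one' : x * (1 : Oct) = x := by
  refine oext8 _ _ ?_ ?_ ?_ ?_ ?_ ?_ ?_ ?_ <;> simp

lemma smul_mul' : (r • x) * y = r • (x * y) := by
  refine oext8 _ _ ?_ ?_ ?_ ?_ ?_ ?_ ?_ ?_ <;> (simp; try ring)

lemma mul_smul' : x * (r • y) = r • (x * y) := by
  refine oext8 _ _ ?_ ?_ ?_ ?_ ?_ ?_ ?_ ?_ <;> (simp; try ring)

lemma smul_smul'' : r • (t • x) = (r * t) • x := by
  refine oext8 _ _ ?_ ?_ ?_ ?_ ?_ ?_ ?_ ?_ <;> (simp; try ring)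

lemma smul_one_add_smul_one : r • (1 : Oct) + t • (1 : Oct) = (r + t) • (1 : Oct) := by
  refine oext8 _ _ ?_ ?_ ?_ ?_ ?_ ?_ ?_ ?_ <;> (simp; try ring)

lemma smul_zero' : r • (0 : Oct) = 0 := by
  refine oext8 _ _ ?_ ?_ ?_ ?_ ?_ ?_ ?_ ?_ <;> simp

lemma conj_mul : conj (x * y) = conj y * conj x := by
  refine oext8 _ _ ?_ ?_ ?_ ?_ ?_ ?_ ?_ ?_ <;> (simp; try ring)

lemma mul_conj_self : x * conj x = eta x • 1 := by
  refine oext8 _ _ ?_ ?_ ?_ ?_ ?_ ?_ ?_ ?_ <;> (simp [eta_eq]; try ring)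

lemma conj_mul_self : conj x * x = eta x • 1 := by
  have := mul_conj_self (conj x)
  rwa [conj_conj, eta_conj] at this

lemma eta_mul : eta (x * y) = eta x * eta y := by
  simp only [eta_eq, mul_c0, mul_c1, mul_c2, mul_c3, mul_c4, mul_c5, mul_c6, mul_c7]
  ring

lemma re_smul_one : re (r • (1 : Oct)) = r := by simp [re]
lemma re_zero : re (0 : Oct) = 0 := rfl

end


lemma smul_add_smul' (r t : ℝ) (x : Oct) : r • x + t • x = (r + t) • x :=
  oext _ _ fun k => by simp only [add_c, smul_c]; ring

lemma zero_smul' (x : Oct) : (0:ℝ) • x = 0 :=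
  oext _ _ fun k => by simp only [smul_c, zero_c]; ring

lemma e_c (t k : Fin 8) : (e t).c k = if k = t then 1 else 0 := rfl

lemma eta_e (t : Fin 8) : eta (e t) = 1 := by
  have h : eta (e t) = ∑ k : Fin 8, ((e t).c k)^2 := by rw [Fin.sum_univ_eight, eta_eq]
  have h2 : ∀ k, ((e t).c k)^2 = if k = t then (1:ℝ) else 0 := by
    intro k; rw [e_c]; split <;> norm_num
  rw [h]
  simp [h2]

lemma main_aux (x j : Oct) (hx : eta x = 4) (hj : eta j = 1) (ε : ℝ) (hε2 : ε * ε = 1) :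
    rtr (jmat ![x, ε • (x * j), 0]) = 8 ∧
    jdet (jmat ![x, ε • (x * j), 0]) = 0 ∧
    jadj (jmat ![x, ε • (x * j), 0]) = 0 ∧
    jmat ![x, ε • (x * j), 0] ≠ 0 := by
  set b := x * j with hbdef
  set J := jmat ![x, ε • b, 0] with hJdef
  have hb : eta b = 4 := by rw [hbdef, eta_mul, hx, hj]; norm_num
  -- entries
  have E00 : J 0 0 = (4:ℝ) • 1 := by
    show conj x * x = _
    rw [conj_mul_self, hx]
  have E11 : J 1 1 = (4:ℝ) • 1 := by
    show conj (ε • b) * (ε • b) = _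
    rw [conj_smul, smul_mul', mul_smul', smul_smul'', conj_mul_self, hb, hε2, smul_smul'']
    norm_num
  have E22 : J 2 2 = 0 := by
    show conj 0 * (0:Oct) = 0
    rw [conj_zero, zero_mul']
  have E01 : J 0 1 = ε • (conj x * b) := by
    show conj x * (ε • b) = _
    rw [mul_smul']
  have E10 : J 1 0 = ε • (conj b * x) := by
    show conj (ε • b) * x = _
    rw [conj_smul, smul_mul']
  have E02 : J 0 2 = 0 := mul_zero' _
  have E12 : J 1 2 = 0 := mul_zero' _
  have E20 : J 2 0 = 0 := by
    show conj 0 * x = 0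
    rw [conj_zero, zero_mul']
  have E21 : J 2 1 = 0 := by
    show conj 0 * (ε • b) = 0
    rw [conj_zero, zero_mul']
  -- z, w
  set z := conj x * b with hzdef
  set w := conj b * x with hwdef
  have hwz : w = conj z := by
    conv_rhs => rw [hzdef, conj_mul, conj_conj]
  have hzcw : conj w = z := by rw [hwz, conj_conj]
  have hetaz : eta z = 16 := by rw [hzdef, eta_mul, eta_conj, hx, hb]; norm_num
  have hetaw : eta w = 16 := by rw [hwz, eta_conj, hetaz]
  have hzw : z * w = (16:ℝ) • 1 := by rw [hwz, mul_conj_self, hetaz]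
  have hwz2 : w * z = (16:ℝ) • 1 := by
    conv_lhs => rw [← hzcw]
    rw [mul_conj_self, hetaw]
  have P44 : ((4:ℝ) • (1:Oct)) * ((4:ℝ) • (1:Oct)) = (16:ℝ) • 1 := by
    rw [smul_mul', one_mul', smul_smul'']; norm_num
  have Pez : ∀ u v : Oct, (ε • u) * (ε • v) = (ε * ε) • (u * v) := fun u v => by
    rw [smul_mul', mul_smul', smul_smul'']
  have Pa : ∀ u : Oct, ((4:ℝ) • (1:Oct)) * (ε • u) = (4 * ε) • u := fun u => by
    rw [smul_mul', mul_smul', one_mul', smul_smul'']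
  have Pb : ∀ u : Oct, (ε • u) * ((4:ℝ) • (1:Oct)) = (4 * ε) • u := fun u => by
    rw [mul_smul', smul_mul', mul_one', smul_smul'']
  -- K = J * J entries
  have htr : rtr J = 8 := by
    simp only [rtr, E00, E11, E22, re_smul_one, re_zero]; norm_num
  have K00 : (J * J) 0 0 = (32:ℝ) • 1 := by
    rw [Matrix.mul_apply, Fin.sum_univ_three, E00, E01, E10, E02, E20, P44, Pez, hε2,
      hzw, mul_zero', smul_smul'', add_zero, smul_one_add_smul_one]
    norm_num
  have K11 : (J * J) 1 1 = (32:ℝ) • 1 := by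
    rw [Matrix.mul_apply, Fin.sum_univ_three, E10, E01, E11, E12, E21, P44, Pez, hε2,
      hwz2, zero_mul', smul_smul'', add_zero, smul_one_add_smul_one]
    norm_num
  have K22 : (J * J) 2 2 = 0 := by
    rw [Matrix.mul_apply, Fin.sum_univ_three, E20, E21, E22, zero_mul', zero_mul', zero_mul',
      add_zero, add_zero]
  have K01 : (J * J) 0 1 = (8 * ε) • z := by
    rw [Matrix.mul_apply, Fin.sum_univ_three, E00, E01, E11, E02, E21, Pa, Pb,
      zero_mul', add_zero, smul_add_smul', show 4 * ε + 4 * ε = 8 * ε by ring]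
  have K10 : (J * J) 1 0 = (8 * ε) • w := by
    rw [Matrix.mul_apply, Fin.sum_univ_three, E10, E00, E11, E12, E20, Pa, Pb,
      mul_zero', add_zero, smul_add_smul', show 4 * ε + 4 * ε = 8 * ε by ring]
  have K02 : (J * J) 0 2 = 0 := by
    rw [Matrix.mul_apply, Fin.sum_univ_three, E02, E12, E22, mul_zero', mul_zero', mul_zero',
      add_zero, add_zero]
  have K12 : (J * J) 1 2 = 0 := by
    rw [Matrix.mul_apply, Fin.sum_univ_three, E02, E12, E22, mul_zero', mul_zero', mul_zero',
      add_zero, add_zero]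
  have K20 : (J * J) 2 0 = 0 := by
    rw [Matrix.mul_apply, Fin.sum_univ_three, E20, E21, E22, zero_mul', zero_mul', zero_mul',
      add_zero, add_zero]
  have K21 : (J * J) 2 1 = 0 := by
    rw [Matrix.mul_apply, Fin.sum_univ_three, E20, E21, E22, zero_mul', zero_mul', zero_mul',
      add_zero, add_zero]
  have htr2 : rtr (J * J) = 64 := by
    simp only [rtr, K00, K11, K22, re_smul_one, re_zero]; norm_num
  have hdet : jdet J = 0 := by
    simp only [jdet, E22, E12, E20, re_zero, eta_zero, mul_zero', zero_mul', re_zero]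
    ring_nf
  refine ⟨htr, hdet, ?_, ?_⟩
  · -- jadj = 0
    have hcoef : ((rtr J) ^ 2 - rtr (J * J)) / 2 = 0 := by rw [htr, htr2]; norm_num
    have Mcoef : (((rtr J) ^ 2 - rtr (J * J)) / 2) • (1 : Matrix (Fin 3) (Fin 3) Oct) = 0 := by
      rw [hcoef]
      exact Matrix.ext fun i k => by rw [Matrix.smul_apply, zero_smul']; rfl
    have h8 : jadj J = J * J - (8:ℝ) • J := by
      show J * J - rtr J • J + (((rtr J) ^ 2 - rtr (J * J)) / 2) • 1 = _
      rw [Mcoef, add_zero, htr]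
    have h00 : (J * J - (8:ℝ) • J) 0 0 = 0 := by
      rw [Matrix.sub_apply, Matrix.smul_apply, K00, E00, smul_smul'',
        show (8:ℝ) * 4 = 32 by norm_num, sub_self]
    have h11 : (J * J - (8:ℝ) • J) 1 1 = 0 := by
      rw [Matrix.sub_apply, Matrix.smul_apply, K11, E11, smul_smul'',
        show (8:ℝ) * 4 = 32 by norm_num, sub_self]
    have h22 : (J * J - (8:ℝ) • J) 2 2 = 0 := by
      rw [Matrix.sub_apply, Matrix.smul_apply, K22, E22, smul_zero', sub_self]
    have h01 : (J * J - (8:ℝ) • J) 0 1 = 0 := by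
      rw [Matrix.sub_apply, Matrix.smul_apply, K01, E01, smul_smul'', sub_self]
    have h10 : (J * J - (8:ℝ) • J) 1 0 = 0 := by
      rw [Matrix.sub_apply, Matrix.smul_apply, K10, E10, smul_smul'', sub_self]
    have h02 : (J * J - (8:ℝ) • J) 0 2 = 0 := by
      rw [Matrix.sub_apply, Matrix.smul_apply, K02, E02, smul_zero', sub_self]
    have h12 : (J * J - (8:ℝ) • J) 1 2 = 0 := by
      rw [Matrix.sub_apply, Matrix.smul_apply, K12, E12, smul_zero', sub_self]
    have h20 : (J * J - (8:ℝ) • J) 2 0 = 0 := by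
      rw [Matrix.sub_apply, Matrix.smul_apply, K20, E20, smul_zero', sub_self]
    have h21 : (J * J - (8:ℝ) • J) 2 1 = 0 := by
      rw [Matrix.sub_apply, Matrix.smul_apply, K21, E21, smul_zero', sub_self]
    rw [h8]
    refine Matrix.ext fun i k => ?_
    fin_cases i <;> fin_cases k
    exacts [h00, h01, h02, h10, h11, h12, h20, h21, h22]
  · -- J ≠ 0
    intro h
    have h0 : J 0 0 = 0 := by rw [h]; rfl
    rw [E00] at h0
    have := congrArg re h0
    rw [re_smul_one, re_zero] at this
    norm_num at this

/-- Let `λ, s ∈ 𝕆` with `η(λ) = 2` and `η(s) = 2`, and let `j` be an imaginary basis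
unit (so `η(j) = 1`, `j̄ = −j`). Set `v = (λ s̄, ±(λ s̄) j, 0) ∈ 𝕆³` and `V = v̄ vᵀ`.
Then `tr(V) = 8`, `det(V) = 0`, and `V♮ = 0`, so `V` is a rank-one element of `J₃^𝕆`
corresponding to a 1/2-BPS black hole with vanishing entropy. -/
theorem second_family_rank_one
    (lam s : Oct) (hlam : eta lam = 2) (hs : eta s = 2)
    (j : Oct) (hj : ∃ t : Fin 8, t ≠ 0 ∧ j = e t)
    (ε : ℝ) (hε : ε = 1 ∨ ε = -1) :
    let v : Fin 3 → Oct := ![lam * conj s, ε • ((lam * conj s) * j), 0]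
    rtr (jmat v) = 8 ∧
    jdet (jmat v) = 0 ∧
    jadj (jmat v) = 0 ∧
    jmat v ≠ 0 ∧
    Real.pi * Real.sqrt |jdet (jmat v)| = 0 := by
  intro v
  have hε2 : ε * ε = 1 := by rcases hε with h | h <;> rw [h] <;> norm_num
  obtain ⟨t, ht0, rfl⟩ := hj
  have hx : eta (lam * conj s) = 4 := by rw [eta_mul, eta_conj, hlam, hs]; norm_num
  obtain ⟨h1, h2, h3, h4⟩ := main_aux (lam * conj s) (e t) hx (eta_e t) ε hε2
  refine ⟨h1, h2, h3, h4, ?_⟩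
  show Real.pi * Real.sqrt |jdet (jmat ![lam * conj s, ε • ((lam * conj s) * e t), 0])| = 0
  rw [h2]
  simp

end LeechPaper
end
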